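/- arXiv:2604.22689 — 8 statements merged into one kernel-verified Lean document; each statement's English description precedes it below -/
import Mathlib

section
/- Let δ > 0, ψ : ℕ → ℝ_{≥0}, y ∈ ℝ², and q ∈ ℕ with ψ(q) ≤ 1/2. Let (a_q, b_q) ∈ ℤ² × ℕ satisfy |b_q·y − a_q| < q^{−δ/(δ+3)}, 1 ≤ b_q ≤ q^{2δ/(δ+3)}, and gcd(a_q, b_q) = 1. Then the Lebesgue measure of Ã_q equals 4ψ(q)² · ∏_{p prime, p | q, p ∤ b_q} (1 − p^{−2}). -/
/-!
Because `ψ(q) ≤ 1/2`, the strips `{t : |q t - p - c| < ψ(q)}` for distinct integers `p` are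
disjoint, so `Ã_q` is the disjoint union, over the residues `v ∈ (ℤ/q)²` for which `b v + a` is
primitive, of products of two sets of the form `[0,1) ∩ {t : ∃ p ≡ r (mod q), |q t - p - c| <
ψ(q)}`. Such a set is `[0,1)` intersected with the preimage of a ball of radius `ψ(q)/q` in
`ℝ/ℤ`, so it has measure `2ψ(q)/q`. The admissible residues are counted with the Chinese
remainder theorem: modulo `ℓ^e` every residue is admissible if `ℓ ∣ b` (as `ℓ ∤ gcd(a, b)`),
while if `ℓ ∤ b` the map `v ↦ b v + a` is a bijection and the `ℓ^(2e-2)` vectors with both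
coordinates divisible by `ℓ` are the only non-primitive ones.
-/

open MeasureTheory Real Filter

/-- The unit box `[0,1)²`. -/
def unitBox : Set (Fin 2 → ℝ) := Set.univ.pi fun _ => Set.Ico (0 : ℝ) 1

/-- `gcd(q, v₁, v₂)` for `q ∈ ℕ` and `v ∈ ℤ²`. -/
def gcdVec (q : ℕ) (v : Fin 2 → ℤ) : ℕ := Nat.gcd q (Int.gcd (v 0) (v 1))

/-- The reduced set `Ã_q`: points `x ∈ [0,1)²` admitting `p ∈ ℤ²` with
`|q·x - p - y| < ψ(q)` and `gcd(q, b·p + a) = 1`. -/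
def Atilde (ψ : ℕ → ℝ) (y : Fin 2 → ℝ) (a : Fin 2 → ℤ) (b : ℕ) (q : ℕ) :
    Set (Fin 2 → ℝ) :=
  {x ∈ unitBox | ∃ p : Fin 2 → ℤ,
    ‖(q : ℝ) • x - (fun i => (p i : ℝ)) - y‖ < ψ q ∧
    gcdVec q (fun i => (b : ℤ) * p i + a i) = 1}

theorem Prod.isCoprime_iff {R S : Type*} [CommSemiring R] [CommSemiring S] {x y : R × S} :
    IsCoprime x y ↔ IsCoprime x.1 y.1 ∧ IsCoprime x.2 y.2 :=
  ⟨fun h => ⟨h.map (RingHom.fst R S), h.map (RingHom.snd R S)⟩,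
    fun ⟨⟨c₁, d₁, h₁⟩, ⟨c₂, d₂, h₂⟩⟩ => ⟨(c₁, c₂), (d₁, d₂), Prod.ext h₁ h₂⟩⟩

theorem RingEquiv.isCoprime_iff {R S : Type*} [CommSemiring R] [CommSemiring S] (e : R ≃+* S)
    {x y : R} : IsCoprime (e x) (e y) ↔ IsCoprime x y :=
  ⟨fun h => by simpa using h.map e.symm.toRingHom, fun h => h.map e.toRingHom⟩

theorem Nat.card_isUnit (M : Type*) [Monoid M] : Nat.card {x : M // IsUnit x} = Nat.card Mˣ :=
  Nat.card_range_of_injective Units.val_injective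

theorem Nat.gcd_intGcd_eq_one_iff_isCoprime_zmod (q : ℕ) (x₁ x₂ : ℤ) :
    Nat.gcd q (Int.gcd x₁ x₂) = 1 ↔ IsCoprime (x₁ : ZMod q) (x₂ : ZMod q) := by
  constructor
  · intro h
    set u := ZMod.unitOfCoprime _ (Nat.coprime_comm.mp h)
    have hu : (u : ZMod q) = x₁ * Int.gcdA x₁ x₂ + x₂ * Int.gcdB x₁ x₂ := by
      rw [ZMod.coe_unitOfCoprime]
      exact_mod_cast congrArg (Int.cast : ℤ → ZMod q) (Int.gcd_eq_gcd_ab x₁ x₂)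
    refine ⟨↑u⁻¹ * Int.gcdA x₁ x₂, ↑u⁻¹ * Int.gcdB x₁ x₂, ?_⟩
    linear_combination (↑u⁻¹ : ZMod q) * hu.symm + u.inv_mul
  · intro h
    set d := Nat.gcd q (Int.gcd x₁ x₂)
    have hdvd : ∀ x : ℤ, (Int.gcd x₁ x₂ : ℤ) ∣ x → (ZMod.cast (x : ZMod q) : ZMod d) = 0 :=
      fun x hx => by
        rw [ZMod.cast_intCast (Nat.gcd_dvd_left _ _), ZMod.intCast_zmod_eq_zero_iff_dvd]
        exact (Int.natCast_dvd_natCast.mpr (Nat.gcd_dvd_right _ _)).trans hx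
    have h₀ := h.map (ZMod.castHom (Nat.gcd_dvd_left _ _) (ZMod d))
    rw [ZMod.castHom_apply, ZMod.castHom_apply, hdvd _ (Int.gcd_dvd_left _ _),
      hdvd _ (Int.gcd_dvd_right _ _), isCoprime_zero_left, isUnit_zero_iff] at h₀
    exact ZMod.subsingleton_iff.mp (subsingleton_of_zero_eq_one h₀)

namespace ZMod

variable {ℓ e : ℕ}

theorem isUnit_prime_pow_iff (hℓ : ℓ.Prime) (he : e ≠ 0) (x : ZMod (ℓ ^ e)) :
    IsUnit x ↔ castHom (dvd_pow_self ℓ he) (ZMod ℓ) x ≠ 0 := by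
  have : NeZero (ℓ ^ e) := ⟨pow_ne_zero e hℓ.ne_zero⟩
  rw [← natCast_zmod_val x, isUnit_natCast_iff_not_dvd_pow hℓ (Nat.pos_of_ne_zero he),
    map_natCast, Ne, natCast_eq_zero_iff]

theorem isCoprime_prime_pow_iff (hℓ : ℓ.Prime) (he : e ≠ 0) (x y : ZMod (ℓ ^ e)) :
    IsCoprime x y ↔ IsUnit x ∨ IsUnit y := by
  have : Fact ℓ.Prime := ⟨hℓ⟩
  refine ⟨fun h => ?_, ?_⟩
  · rw [isUnit_prime_pow_iff hℓ he, isUnit_prime_pow_iff hℓ he]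
    exact (h.map _).ne_zero_or_ne_zero
  · rintro (⟨u, rfl⟩ | ⟨u, rfl⟩)
    · exact ⟨↑u⁻¹, 0, by simp⟩
    · exact ⟨0, ↑u⁻¹, by simp⟩

theorem card_nonunits_prime_pow (hℓ : ℓ.Prime) (he : e ≠ 0) :
    Nat.card {x : ZMod (ℓ ^ e) // ¬ IsUnit x} = ℓ ^ (e - 1) := by
  have : NeZero (ℓ ^ e) := ⟨pow_ne_zero e hℓ.ne_zero⟩
  rw [Nat.card_eq_fintype_card, Fintype.card_subtype_compl, ← Nat.card_eq_fintype_card,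
    ← Nat.card_eq_fintype_card, Nat.card_isUnit, Nat.card_eq_fintype_card (α := (ZMod _)ˣ),
    card_units_eq_totient, Nat.card_zmod, Nat.totient_prime_pow hℓ (Nat.pos_of_ne_zero he)]
  obtain ⟨k, rfl⟩ := Nat.exists_eq_add_one_of_ne_zero he
  rw [Nat.add_sub_cancel, pow_succ, ← Nat.mul_sub, Nat.sub_sub_self hℓ.one_le, mul_one]

end ZMod

def admissibleResidues (q : ℕ) (a : Fin 2 → ℤ) (b : ℕ) : Set (Fin 2 → ZMod q) :=
  {v | IsCoprime ((b : ZMod q) * v 0 + a 0) ((b : ZMod q) * v 1 + a 1)}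

theorem gcdVec_eq_one_iff_mem_admissibleResidues (q : ℕ) (a p : Fin 2 → ℤ) (b : ℕ) :
    gcdVec q (fun i => (b : ℤ) * p i + a i) = 1 ↔
      (fun i => (p i : ZMod q)) ∈ admissibleResidues q a b := by
  rw [gcdVec, Nat.gcd_intGcd_eq_one_iff_isCoprime_zmod]
  push_cast
  rfl

section PrimePower

variable {a : Fin 2 → ℤ} {b ℓ e : ℕ}

theorem admissibleResidues_prime_pow_eq_univ (hℓ : ℓ.Prime) (he : e ≠ 0) (hb : ℓ ∣ b)
    (hab : Nat.gcd (Int.gcd (a 0) (a 1)) b = 1) : admissibleResidues (ℓ ^ e) a b = Set.univ := by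
  have hπ : ∀ (v : Fin 2 → ZMod (ℓ ^ e)) i,
      ZMod.castHom (dvd_pow_self ℓ he) (ZMod ℓ) (b * v i + a i) = a i := fun v i => by
    rw [map_add, map_mul, map_natCast, map_intCast, (ZMod.natCast_eq_zero_iff b ℓ).mpr hb,
      zero_mul, zero_add]
  have ha : ¬ ((ℓ : ℤ) ∣ a 0 ∧ (ℓ : ℤ) ∣ a 1) := fun ⟨h₀, h₁⟩ => hℓ.one_lt.ne' <|
    Nat.eq_one_of_dvd_coprimes hab (Int.natCast_dvd_natCast.mp (Int.dvd_coe_gcd h₀ h₁)) hb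
  refine Set.eq_univ_of_forall fun v => ?_
  rw [admissibleResidues, Set.mem_ofPred_eq, ZMod.isCoprime_prime_pow_iff hℓ he,
    ZMod.isUnit_prime_pow_iff hℓ he, ZMod.isUnit_prime_pow_iff hℓ he, hπ, hπ, Ne, Ne,
    ZMod.intCast_zmod_eq_zero_iff_dvd, ZMod.intCast_zmod_eq_zero_iff_dvd]
  tauto

theorem card_admissibleResidues_prime_pow_of_not_dvd (hℓ : ℓ.Prime) (he : e ≠ 0)
    (hb : ¬ ℓ ∣ b) :
    Nat.card (admissibleResidues (ℓ ^ e) a b) = (ℓ ^ e) ^ 2 - (ℓ ^ (e - 1)) ^ 2 := by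
  have hbu : IsUnit (b : ZMod (ℓ ^ e)) :=
    (ZMod.isUnit_natCast_iff_not_dvd_pow hℓ (Nat.pos_of_ne_zero he)).mpr hb
  have hbad : ∀ c : ZMod (ℓ ^ e), Nat.card {u // ¬ IsUnit (b * u + c)} = ℓ ^ (e - 1) := fun c =>
    (Nat.card_congr (((Units.mulLeft hbu.unit).trans (Equiv.addRight c)).subtypeEquiv
      fun _ => Iff.rfl)).trans (ZMod.card_nonunits_prime_pow hℓ he)
  have hcompl : (admissibleResidues (ℓ ^ e) a b)ᶜ =
      {v | ∀ i, ¬ IsUnit ((b : ZMod (ℓ ^ e)) * v i + (a i : ZMod (ℓ ^ e)))} := by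
    ext v
    simp [admissibleResidues, ZMod.isCoprime_prime_pow_iff hℓ he, Fin.forall_fin_two]
  have hcard : Nat.card ↥(admissibleResidues (ℓ ^ e) a b)ᶜ = (ℓ ^ (e - 1)) ^ 2 := by
    rw [hcompl]
    refine (Nat.card_congr (Equiv.subtypePiEquivPi (β := fun _ : Fin 2 => ZMod (ℓ ^ e))
      (p := fun i u => ¬ IsUnit ((b : ZMod (ℓ ^ e)) * u + a i)))).trans ?_
    rw [Nat.card_pi, Fin.prod_univ_two, hbad, hbad, sq]
  have : NeZero (ℓ ^ e) := ⟨pow_ne_zero e hℓ.ne_zero⟩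
  have htotal : Nat.card (Fin 2 → ZMod (ℓ ^ e)) = (ℓ ^ e) ^ 2 := by
    rw [Nat.card_fun, Nat.card_zmod, Nat.card_fin]
  rw [← hcard, ← htotal, Nat.card_coe_set_eq, Nat.card_coe_set_eq, Set.ncard_compl,
    Nat.sub_sub_self (Set.ncard_le_card _)]

end PrimePower

theorem card_admissibleResidues_mul (a : Fin 2 → ℤ) (b : ℕ) {m n : ℕ} (h : m.Coprime n) :
    Nat.card (admissibleResidues (m * n) a b) =
      Nat.card (admissibleResidues m a b) * Nat.card (admissibleResidues n a b) := by
  let e := ZMod.chineseRemainder h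
  let E : (Fin 2 → ZMod (m * n)) ≃ (Fin 2 → ZMod m) × (Fin 2 → ZMod n) :=
    (Equiv.piCongrRight fun _ => e.toEquiv).trans (Equiv.arrowProdEquivProdArrow _ _ _)
  have hE : ∀ v, v ∈ admissibleResidues (m * n) a b ↔
      (E v).1 ∈ admissibleResidues m a b ∧ (E v).2 ∈ admissibleResidues n a b := by
    intro v
    simp only [admissibleResidues, Set.mem_ofPred_eq, ← e.isCoprime_iff, Prod.isCoprime_iff,
      map_add, map_mul, map_natCast, map_intCast]
    rfl
  rw [← Nat.card_prod]
  exact Nat.card_congr ((E.subtypeEquiv hE).trans (Equiv.subtypeProdEquivProd ..))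

theorem card_admissibleResidues {a : Fin 2 → ℤ} {b : ℕ}
    (hab : Nat.gcd (Int.gcd (a 0) (a 1)) b = 1) {q : ℕ} (hq : q ≠ 0) :
    (Nat.card (admissibleResidues q a b) : ℝ) =
      q ^ 2 * ∏ p ∈ q.primeFactors.filter (fun p => ¬ p ∣ b), (1 - 1 / (p : ℝ) ^ 2) := by
  induction q using Nat.recOnPosPrimePosCoprime with
  | zero => exact absurd rfl hq
  | one =>
    have : admissibleResidues 1 a b = Set.univ :=
      Set.eq_univ_of_forall fun _ => ⟨0, 0, Subsingleton.elim _ _⟩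
    simp [this]
  | prime_pow ℓ e hℓ he =>
    rw [Nat.primeFactors_prime_pow he.ne' hℓ, Finset.filter_singleton]
    by_cases hb : ℓ ∣ b
    · simp [hb, admissibleResidues_prime_pow_eq_univ hℓ he.ne' hb hab, Nat.card_fun]
    · obtain ⟨k, rfl⟩ := Nat.exists_eq_add_one_of_ne_zero he.ne'
      have hle : (ℓ ^ k) ^ 2 ≤ (ℓ ^ (k + 1)) ^ 2 := by gcongr; exacts [hℓ.one_le, k.le_succ]
      have hℓ₀ : (ℓ : ℝ) ≠ 0 := by exact_mod_cast hℓ.ne_zero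
      rw [card_admissibleResidues_prime_pow_of_not_dvd hℓ he.ne' hb, if_pos hb,
        Nat.add_sub_cancel, Finset.prod_singleton, Nat.cast_sub hle]
      push_cast
      field_simp
      ring
  | coprime m n _ _ hmn ihm ihn =>
    rw [card_admissibleResidues_mul a b hmn, hmn.primeFactors_mul, Finset.filter_union,
      Finset.prod_union (Finset.disjoint_filter_filter hmn.disjoint_primeFactors), Nat.cast_mul,
      ihm (by omega), ihn (by omega)]
    push_cast
    ring

theorem pi_norm_lt_iff_of_nonempty {ι : Type*} [Fintype ι] [Nonempty ι] {E : ι → Type*}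
    [∀ i, SeminormedAddGroup (E i)] {x : ∀ i, E i} {r : ℝ} : ‖x‖ < r ↔ ∀ i, ‖x i‖ < r := by
  rcases lt_or_ge 0 r with hr | hr
  · exact pi_norm_lt_iff hr
  · exact iff_of_false (fun h => ((norm_nonneg _).trans_lt h).not_ge hr)
      fun h => ((norm_nonneg _).trans_lt (h (Classical.arbitrary ι))).not_ge hr

namespace UnitAddCircle

theorem coe_mem_ball_iff {t s δ : ℝ} :
    (t : UnitAddCircle) ∈ Metric.ball (s : UnitAddCircle) δ ↔ ∃ k : ℤ, |t - s - k| < δ := by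
  rw [Metric.mem_ball, dist_eq_norm, ← AddCircle.coe_sub, norm_eq]
  exact ⟨fun h => ⟨_, h⟩, fun ⟨k, hk⟩ => (round_le _ k).trans_lt hk⟩

theorem volume_Ico_inter_preimage_ball (x : UnitAddCircle) {δ : ℝ} (hδ : δ ≤ 1 / 2) :
    volume (Set.Ico (0 : ℝ) 1 ∩ (↑) ⁻¹' Metric.ball x δ) = ENNReal.ofReal (2 * δ) := by
  have hmeas : MeasurableSet (((↑) : ℝ → UnitAddCircle) ⁻¹' Metric.ball x δ) :=
    measurableSet_ball.preimage AddCircle.measurable_mk'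
  have hmk := (AddCircle.measurePreserving_mk 1 0).measure_preimage
    (measurableSet_ball (x := x) (ε := δ)).nullMeasurableSet
  rw [zero_add] at hmk
  rw [Set.inter_comm, ← Measure.restrict_apply hmeas, Measure.restrict_congr_set Ico_ae_eq_Ioc,
    hmk, ← measure_congr AddCircle.closedBall_ae_eq_ball, AddCircle.volume_closedBall,
    min_eq_right (by linarith)]

end UnitAddCircle

def residueStrip (q : ℕ) (r : ZMod q) (c ε : ℝ) : Set ℝ :=
  {t | ∃ p : ℤ, (p : ZMod q) = r ∧ |q * t - p - c| < ε}

theorem residueStrip_intCast {q : ℕ} (hq : q ≠ 0) (r : ℤ) (c ε : ℝ) :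
    residueStrip q r c ε = (↑) ⁻¹' Metric.ball (((r + c) / q : ℝ) : UnitAddCircle) (ε / q) := by
  have hq₀ : (0 : ℝ) < q := by positivity
  have key : ∀ (t : ℝ) (k : ℤ),
      |q * t - ((r + q * k : ℤ) : ℝ) - c| = q * |t - (r + c) / q - k| := fun t k => by
    rw [← abs_of_pos hq₀, ← abs_mul, abs_of_pos hq₀]
    congr 1
    field_simp
    push_cast
    ring
  ext t
  simp only [residueStrip, Set.mem_ofPred_eq, Set.mem_preimage, UnitAddCircle.coe_mem_ball_iff,
    lt_div_iff₀ hq₀]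
  constructor
  · rintro ⟨p, hp, hpt⟩
    obtain ⟨k, hk⟩ := (ZMod.intCast_eq_intCast_iff_dvd_sub r p q).mp hp.symm
    obtain rfl : p = r + q * k := by linarith
    exact ⟨k, by rwa [key, mul_comm] at hpt⟩
  · rintro ⟨k, hk⟩
    exact ⟨r + q * k, by simp, by rwa [key, mul_comm]⟩

theorem measurableSet_residueStrip {q : ℕ} (hq : q ≠ 0) (r : ZMod q) (c ε : ℝ) :
    MeasurableSet (residueStrip q r c ε) := by
  have : NeZero q := ⟨hq⟩
  obtain ⟨r, rfl⟩ := ZMod.intCast_surjective r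
  rw [residueStrip_intCast hq]
  exact measurableSet_ball.preimage AddCircle.measurable_mk'

theorem volume_Ico_inter_residueStrip {q : ℕ} (hq : q ≠ 0) (r : ZMod q) (c : ℝ) {ε : ℝ}
    (hε : ε ≤ 1 / 2) :
    volume (Set.Ico (0 : ℝ) 1 ∩ residueStrip q r c ε) = ENNReal.ofReal (2 * ε / q) := by
  have : NeZero q := ⟨hq⟩
  have hq₁ : (1 : ℝ) ≤ q := by exact_mod_cast Nat.one_le_iff_ne_zero.mpr hq
  have hεq : ε / q ≤ 1 / 2 := by
    rw [div_le_iff₀ (by positivity)]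
    nlinarith
  obtain ⟨r, rfl⟩ := ZMod.intCast_surjective r
  rw [residueStrip_intCast hq, UnitAddCircle.volume_Ico_inter_preimage_ball _ hεq, mul_div_assoc]

theorem disjoint_residueStrip {q : ℕ} {r r' : ZMod q} (h : r ≠ r') (c : ℝ) {ε : ℝ}
    (hε : ε ≤ 1 / 2) : Disjoint (residueStrip q r c ε) (residueStrip q r' c ε) := by
  rw [Set.disjoint_left]
  rintro t ⟨p, rfl, hp⟩ ⟨p', rfl, hp'⟩
  rw [abs_lt] at hp hp'
  have h₁ : p < p' + 1 := by exact_mod_cast (by linarith : (p : ℝ) < p' + 1)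
  have h₂ : p' < p + 1 := by exact_mod_cast (by linarith : (p' : ℝ) < p + 1)
  exact h (congrArg _ (by omega : p = p'))

theorem Atilde_eq_biUnion (ψ : ℕ → ℝ) (y : Fin 2 → ℝ) (a : Fin 2 → ℤ) (b q : ℕ) :
    Atilde ψ y a b q = ⋃ v ∈ admissibleResidues q a b,
      Set.univ.pi fun i => Set.Ico 0 1 ∩ residueStrip q (v i) (y i) (ψ q) := by
  have hnorm : ∀ (x : Fin 2 → ℝ) (p : Fin 2 → ℤ),
      ‖(q : ℝ) • x - (fun i => (p i : ℝ)) - y‖ < ψ q ↔ ∀ i, |q * x i - p i - y i| < ψ q := by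
    intro x p
    simp [pi_norm_lt_iff_of_nonempty]
  ext x
  simp only [Atilde, unitBox, Set.mem_ofPred_eq, Set.mem_iUnion, Set.mem_pi, Set.mem_univ,
    true_imp_iff, Set.mem_inter_iff, hnorm, gcdVec_eq_one_iff_mem_admissibleResidues, exists_prop]
  constructor
  · rintro ⟨hx, p, hp, hadm⟩
    exact ⟨_, hadm, fun i => ⟨hx i, p i, rfl, hp i⟩⟩
  · rintro ⟨v, hv, hx⟩
    choose hx p hpv hp using hx
    exact ⟨hx, p, hp, funext hpv ▸ hv⟩

theorem volume_Atilde (ψ : ℕ → ℝ) (y : Fin 2 → ℝ) (a : Fin 2 → ℤ) (b : ℕ) {q : ℕ} (hq : q ≠ 0)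
    (hhalf : ψ q ≤ 1 / 2) :
    volume (Atilde ψ y a b q) =
      Nat.card (admissibleResidues q a b) * ENNReal.ofReal (2 * ψ q / q) ^ 2 := by
  have : NeZero q := ⟨hq⟩
  have : Fintype (admissibleResidues q a b) := Fintype.ofFinite _
  have hdisj : (admissibleResidues q a b).PairwiseDisjoint fun v =>
      Set.univ.pi fun i => Set.Ico 0 1 ∩ residueStrip q (v i) (y i) (ψ q) := by
    intro v _ w _ hvw
    obtain ⟨i, hi⟩ := Function.ne_iff.mp hvw
    exact Set.disjoint_univ_pi.mpr ⟨i, (disjoint_residueStrip hi (y i) hhalf).mono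
      Set.inter_subset_right Set.inter_subset_right⟩
  rw [Atilde_eq_biUnion, measure_biUnion (Set.to_countable _) hdisj fun v _ =>
    MeasurableSet.univ_pi fun i => measurableSet_Ico.inter (measurableSet_residueStrip hq _ _ _)]
  simp only [volume_pi_pi, volume_Ico_inter_residueStrip hq _ _ hhalf, Finset.prod_const,
    Finset.card_univ, Fintype.card_fin, tsum_fintype, Finset.sum_const, nsmul_eq_mul]
  rw [← Nat.card_eq_fintype_card]

theorem measure_Atilde_general (ψ : ℕ → ℝ) (hψ : ∀ n, 0 ≤ ψ n)
    (y : Fin 2 → ℝ) (q : ℕ) (hq : 1 ≤ q) (hhalf : ψ q ≤ 1 / 2)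
    (a : Fin 2 → ℤ) (b : ℕ)
    (hgcdab : Nat.gcd (Int.gcd (a 0) (a 1)) b = 1) :
    volume (Atilde ψ y a b q) =
      ENNReal.ofReal (4 * ψ q ^ 2 *
        ∏ p ∈ q.primeFactors.filter (fun p => ¬ p ∣ b), (1 - 1 / (p : ℝ) ^ 2)) := by
  have hq₀ : q ≠ 0 := Nat.one_le_iff_ne_zero.mp hq
  have hside : 0 ≤ 2 * ψ q / q := by have := hψ q; positivity
  rw [volume_Atilde ψ y a b hq₀ hhalf, ← ENNReal.ofReal_natCast, ← ENNReal.ofReal_pow hside,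
    ← ENNReal.ofReal_mul (Nat.cast_nonneg _), card_admissibleResidues hgcdab hq₀]
  congr 1
  field_simp
  ring

/-- Lemma: under the Dirichlet conditions on `(a,b)` and `ψ(q) ≤ 1/2`, the Lebesgue
measure of `Ã_q` equals `4 ψ(q)² ∏_{p | q, p ∤ b} (1 - p⁻²)`. -/
theorem measure_Atilde (δ : ℝ) (hδ : 0 < δ) (ψ : ℕ → ℝ) (hψ : ∀ n, 0 ≤ ψ n)
    (y : Fin 2 → ℝ) (q : ℕ) (hq : 1 ≤ q) (hhalf : ψ q ≤ 1 / 2)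
    (a : Fin 2 → ℤ) (b : ℕ) (hb1 : 1 ≤ b)
    (hab : ‖(b : ℝ) • y - (fun i => (a i : ℝ))‖ < (q : ℝ) ^ (-(δ / (δ + 3))))
    (hb2 : (b : ℝ) ≤ (q : ℝ) ^ (2 * δ / (δ + 3)))
    (hgcdab : Nat.gcd (Int.gcd (a 0) (a 1)) b = 1) :
    volume (Atilde ψ y a b q) =
      ENNReal.ofReal (4 * ψ q ^ 2 *
        ∏ p ∈ q.primeFactors.filter (fun p => ¬ p ∣ b), (1 - 1 / (p : ℝ) ^ 2)) :=
  measure_Atilde_general ψ hψ y q hq hhalf a b hgcdab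
end

section
/- Let δ > 0, ψ : ℕ → ℝ_{≥0} with ψ(q) ≤ 1/2 for every q, y ∈ ℝ², and let (a_q, b_q)_{q∈ℕ} ⊂ ℤ² × ℕ satisfy |b_q·y − a_q| < q^{−δ/(δ+3)}, 1 ≤ b_q ≤ q^{2δ/(δ+3)}, and gcd(a_q, b_q) = 1 for all q. Suppose ∑_{q=1}^∞ ψ(q)² = ∞. If the sets {Ã_q}_{q∈ℕ} are quasi-independent on average, i.e. limsup_{Q→∞} (∑_{q=1}^Q |Ã_q|)² / (∑_{q,r=1}^Q |Ã_q ∩ Ã_r|) > 0, then |limsup_{q→∞} Ã_q| = 1. -/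
open MeasureTheory Real Filter

/-!
The balls of radius `ψ q / q` around the points `(p + y) / q`, `p ∈ ℤ²`, are pairwise disjoint,
and `Ã_q` is the part in `[0,1)²` of the union of those with `gcd(q, b p + a) = 1`. A square of
side `h` contains the balls of about `(q h)²` consecutive centres, and for each prime `ℓ ∣ q` the
condition `ℓ ∣ b p + a` removes at most `(q h / ℓ + 1)²` of them: as `gcd(a, b) = 1`, it has no
solution when `ℓ ∣ b` and fixes a residue class of `p` mod `ℓ` otherwise. As `∑ ℓ⁻² < 2/3` and
`q` has `o(q)` prime factors, a positive proportion survives for large `q`, so that eventually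
`|Ã_q ∩ B| ≫ |Ã_q| |B|` for every cell `B` of every grid.

This local ubiquity turns quasi-independence on average into a density statement. Applying the
Chung–Erdős inequality inside each cell, and Markov's inequality to the local pair sums
`∑ |Ã_q ∩ Ã_r ∩ B|` (which add up over the cells to the global one), all cells of a grid except
some of total measure `ε` meet `limsup Ã_q` in proportion `≫ ε`. By Lebesgue's density theorem,
`[0,1)² \ limsup Ã_q` then has measure at most `ε`.
-/

open scoped ENNReal Topology
open Function Metric

section ChungErdos

variable {α ι : Type*} [MeasurableSpace α]

theorem sq_sum_measure_le_measure_biUnion_mul (μ : Measure α) (F : Finset ι) {A : ι → Set α}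
    (hA : ∀ i ∈ F, MeasurableSet (A i)) :
    (∑ i ∈ F, μ (A i)) ^ 2 ≤ μ (⋃ i ∈ F, A i) * ∑ i ∈ F, ∑ j ∈ F, μ (A i ∩ A j) := by
  classical
  set U := ⋃ i ∈ F, A i
  set f : α → ℝ≥0∞ := fun x => ∑ i ∈ F, (A i).indicator 1 x
  have hU : MeasurableSet U := F.measurableSet_biUnion hA
  have hf : Measurable f := Finset.measurable_sum _ fun i hi => measurable_one.indicator (hA i hi)
  have hfU : f * U.indicator 1 = f := by
    ext x
    by_cases hx : x ∈ U
    · simp [Set.indicator_of_mem hx]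
    · have : ∀ i ∈ F, x ∉ A i := fun i hi hxi => hx (Set.mem_biUnion hi hxi)
      simp [f, Set.indicator_of_notMem hx, Finset.sum_eq_zero fun i hi =>
        Set.indicator_of_notMem (this i hi) _]
  have hf1 : ∫⁻ x, f x ∂μ = ∑ i ∈ F, μ (A i) := by
    rw [lintegral_finsetSum _ fun i hi => measurable_one.indicator (hA i hi)]
    exact Finset.sum_congr rfl fun i hi => lintegral_indicator_one (hA i hi)
  have hf2 : ∫⁻ x, f x ^ (2 : ℝ) ∂μ = ∑ i ∈ F, ∑ j ∈ F, μ (A i ∩ A j) := by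
    have hsq : ∀ x, f x ^ (2 : ℝ) = ∑ i ∈ F, ∑ j ∈ F, (A i ∩ A j).indicator 1 x := fun x => by
      simp only [ENNReal.rpow_two, sq, f, Finset.sum_mul_sum, Set.inter_indicator_one,
        Pi.mul_apply]
    simp_rw [hsq]
    rw [lintegral_finsetSum _ fun i hi => Finset.measurable_sum _ fun j hj =>
      measurable_one.indicator ((hA i hi).inter (hA j hj))]
    refine Finset.sum_congr rfl fun i hi => ?_
    rw [lintegral_finsetSum _ fun j hj => measurable_one.indicator ((hA i hi).inter (hA j hj))]
    exact Finset.sum_congr rfl fun j hj => lintegral_indicator_one ((hA i hi).inter (hA j hj))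
  have hU2 : ∫⁻ x, U.indicator 1 x ^ (2 : ℝ) ∂μ = μ U := by
    rw [← lintegral_indicator_one hU]
    congr 1 with x
    by_cases hx : x ∈ U <;> simp [hx]
  -- Cauchy–Schwarz for `f` and the indicator of its support `U`
  have hCS := ENNReal.lintegral_mul_le_Lp_mul_Lq μ Real.HolderConjugate.two_two
    hf.aemeasurable (measurable_one.indicator hU).aemeasurable (f := f) (g := U.indicator 1)
  rw [hfU, hf1, hf2, hU2] at hCS
  calc (∑ i ∈ F, μ (A i)) ^ 2
      ≤ ((∑ i ∈ F, ∑ j ∈ F, μ (A i ∩ A j)) ^ (1 / 2 : ℝ) * μ U ^ (1 / 2 : ℝ)) ^ 2 := by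
        gcongr
    _ = μ U * ∑ i ∈ F, ∑ j ∈ F, μ (A i ∩ A j) := by
        rw [mul_pow, ← ENNReal.rpow_natCast, ← ENNReal.rpow_natCast, ← ENNReal.rpow_mul,
          ← ENNReal.rpow_mul]
        norm_num [mul_comm]

end ChungErdos

lemma exists_frequently_mul_le_of_pos_limsup_div {x y : ℕ → ℝ≥0∞}
    (h : 0 < atTop.limsup fun Q => x Q / y Q) :
    ∃ c : ℝ≥0∞, c ≠ 0 ∧ ∃ᶠ Q in atTop, c * y Q ≤ x Q := by
  obtain ⟨c, hc0, hc⟩ := exists_between h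
  exact ⟨c, hc0.ne', (frequently_lt_of_lt_limsup (by isBoundedDefault) hc).mono
    fun Q hQ => ENNReal.mul_le_of_le_div hQ.le⟩

lemma tendsto_sum_Icc_one_of_tsum_eq_top {f : ℕ → ℝ≥0∞} (h0 : f 0 ≠ ∞) (hf : ∑' q, f q = ∞) :
    Tendsto (fun Q => ∑ q ∈ Finset.Icc 1 Q, f q) atTop (𝓝 ∞) := by
  have hsplit : ∀ Q, ∑ q ∈ Finset.range (Q + 1), f q = f 0 + ∑ q ∈ Finset.Icc 1 Q, f q := by
    intro Q
    rw [Finset.range_eq_Ico, Finset.sum_eq_sum_Ico_succ_bot Q.succ_pos, zero_add,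
      Nat.succ_eq_add_one, Finset.Ico_add_one_right_eq_Icc]
  have h := (ENNReal.tendsto_nat_tsum f).comp (tendsto_add_atTop_nat 1)
  simp only [hf, Function.comp_def, hsplit, ENNReal.tendsto_nhds_top_iff_nnreal] at h ⊢
  intro x
  filter_upwards [h (x + (f 0).toNNReal)] with Q hQ
  rwa [ENNReal.coe_add, ENNReal.coe_toNNReal h0, add_comm, ENNReal.add_lt_add_iff_left h0] at hQ

lemma tsum_eq_top_of_eventually_ofReal_le {f : ℕ → ℝ≥0∞} {g : ℕ → ℝ} (hg : ¬ Summable g)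
    (hg0 : ∀ n, 0 ≤ g n) (hle : ∀ᶠ n in atTop, ENNReal.ofReal (g n) ≤ f n) : ∑' n, f n = ∞ := by
  by_contra h
  refine hg (Summable.of_norm_bounded_eventually_nat (ENNReal.summable_toReal h)
    (hle.mono fun n hn => ?_))
  rw [Real.norm_of_nonneg (hg0 n)]
  exact (ENNReal.ofReal_le_iff_le_toReal (ENNReal.ne_top_of_tsum_ne_top h n)).1 hn

lemma antitone_tail {α : Type*} (A : ℕ → Set α) : Antitone fun N => ⋃ q, ⋃ _ : N ≤ q, A q :=
  fun _ _ hN => Set.iUnion₂_mono' fun q hq => ⟨q, hN.trans hq, subset_rfl⟩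

section SparseCells

variable {α V : Type*} [MeasurableSpace α] {μ : Measure α} [Fintype V] {B : V → Set α}
  {β : ℝ≥0∞} {A : ℕ → Set α}

theorem measure_iUnion_sparse_cells_le (hB : ∀ v, MeasurableSet (B v))
    (hBd : Pairwise (Disjoint on B)) (hβ : ∀ v, μ (B v) = β) (hβ0 : β ≠ 0) (hβtop : β ≠ ∞)
    (hA : ∀ q, MeasurableSet (A q)) (F : Finset ℕ) {S : ℝ≥0∞} (hS0 : S ≠ 0) (hStop : S ≠ ∞)
    {c c₀ ε : ℝ≥0∞} (hT : c₀ * ∑ q ∈ F, ∑ r ∈ F, μ (A q ∩ A r) ≤ S ^ 2)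
    (hloc : ∀ v, c * β * S ≤ ∑ q ∈ F, μ (A q ∩ B v)) :
    μ (⋃ v, ⋃ (_ : μ ((⋃ q ∈ F, A q) ∩ B v) < c₀ * ε * c ^ 2 * β), B v) ≤ ε := by
  classical
  set T : V → ℝ≥0∞ := fun v => ∑ q ∈ F, ∑ r ∈ F, μ (A q ∩ A r ∩ B v)
  have hSβ0 : S ^ 2 * β ≠ 0 := mul_ne_zero (pow_ne_zero 2 hS0) hβ0
  have hSβtop : S ^ 2 * β ≠ ∞ := ENNReal.mul_ne_top (ENNReal.pow_ne_top hStop) hβtop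
  have hTsum : ∑ v, T v ≤ ∑ q ∈ F, ∑ r ∈ F, μ (A q ∩ A r) := by
    simp only [T]
    rw [Finset.sum_comm]
    gcongr with q
    rw [Finset.sum_comm]
    gcongr with r
    rw [← measure_biUnion_finset (fun v _ w _ hvw => (hBd hvw).mono Set.inter_subset_right
      Set.inter_subset_right) fun v _ => ((hA q).inter (hA r)).inter (hB v)]
    exact measure_mono (Set.iUnion₂_subset fun v _ => Set.inter_subset_left)
  -- Markov's inequality for the local pair sums `T v`
  set bad := Finset.univ.filter fun v => S ^ 2 * β < c₀ * ε * T v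
  have hbad : bad.card * β ≤ ε := by
    have h : bad.card * β * S ^ 2 ≤ ε * S ^ 2 := calc
      _ = bad.card • (S ^ 2 * β) := by rw [nsmul_eq_mul]; ring
      _ ≤ ∑ v ∈ bad, c₀ * ε * T v :=
        Finset.card_nsmul_le_sum _ _ _ fun v hv => (Finset.mem_filter.1 hv).2.le
      _ ≤ ∑ v, c₀ * ε * T v := Finset.sum_le_sum_of_subset (Finset.subset_univ _)
      _ = ε * (c₀ * ∑ v, T v) := by rw [← Finset.mul_sum]; ring
      _ ≤ ε * S ^ 2 := by gcongr; exact le_trans (by gcongr) hT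
    exact (ENNReal.mul_le_mul_iff_left (pow_ne_zero 2 hS0) (ENNReal.pow_ne_top hStop)).1 h
  have hgood : ∀ v ∉ bad, c₀ * ε * c ^ 2 * β ≤ μ ((⋃ q ∈ F, A q) ∩ B v) := by
    intro v hv
    have hTv : c₀ * ε * T v ≤ S ^ 2 * β := by simpa [bad] using hv
    have hCE := sq_sum_measure_le_measure_biUnion_mul μ F (A := fun q => A q ∩ B v)
      fun q _ => (hA q).inter (hB v)
    simp only [← Set.inter_inter_distrib_right, ← Set.iUnion₂_inter] at hCE
    refine (ENNReal.mul_le_mul_iff_left hSβ0 hSβtop).1 ?_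
    calc c₀ * ε * c ^ 2 * β * (S ^ 2 * β) = c₀ * ε * (c * β * S) ^ 2 := by ring
      _ ≤ c₀ * ε * (μ ((⋃ q ∈ F, A q) ∩ B v) * T v) := by
        gcongr
        exact (pow_le_pow_left' (hloc v) 2).trans hCE
      _ = μ ((⋃ q ∈ F, A q) ∩ B v) * (c₀ * ε * T v) := by ring
      _ ≤ μ ((⋃ q ∈ F, A q) ∩ B v) * (S ^ 2 * β) := by gcongr
  calc μ (⋃ v, ⋃ (_ : μ ((⋃ q ∈ F, A q) ∩ B v) < c₀ * ε * c ^ 2 * β), B v)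
      ≤ μ (⋃ v ∈ bad, B v) := by
        refine measure_mono (Set.iUnion₂_subset fun v hv => ?_)
        exact Set.subset_biUnion_of_mem (u := B) (by by_contra h; exact (hgood v h).not_gt hv)
    _ ≤ ∑ v ∈ bad, μ (B v) := measure_biUnion_finset_le _ _
    _ = bad.card * β := by simp [hβ]
    _ ≤ ε := hbad

theorem measure_iUnion_sparse_tail_cells_le (hB : ∀ v, MeasurableSet (B v))
    (hBd : Pairwise (Disjoint on B)) (hβ : ∀ v, μ (B v) = β) (hβ0 : β ≠ 0) (hβtop : β ≠ ∞)
    (hA : ∀ q, MeasurableSet (A q)) (hAfin : ∀ q, μ (A q) ≠ ∞)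
    (hS : Tendsto (fun Q => ∑ q ∈ Finset.Icc 1 Q, μ (A q)) atTop (𝓝 ∞)) {c c₀ : ℝ≥0∞}
    (hloc : ∀ᶠ q in atTop, ∀ v, c * μ (A q) * β ≤ μ (A q ∩ B v))
    (hqi : ∃ᶠ Q in atTop, c₀ * ∑ q ∈ Finset.Icc 1 Q, ∑ r ∈ Finset.Icc 1 Q, μ (A q ∩ A r) ≤
      (∑ q ∈ Finset.Icc 1 Q, μ (A q)) ^ 2) (ε : ℝ≥0∞) (N : ℕ) :
    μ (⋃ v, ⋃ (_ : μ ((⋃ q, ⋃ _ : N ≤ q, A q) ∩ B v) < c₀ * ε * (c / 2) ^ 2 * β), B v)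
      ≤ ε := by
  set S : ℕ → ℝ≥0∞ := fun Q => ∑ q ∈ Finset.Icc 1 Q, μ (A q)
  obtain ⟨m₁, hm₁⟩ := eventually_atTop.1 hloc
  set m := max N m₁
  have hSm : 2 * S m ≠ ∞ := ENNReal.mul_ne_top ENNReal.ofNat_ne_top
    (ENNReal.sum_ne_top.2 fun q _ => hAfin q)
  -- a quasi-independent `Q` so large that the terms `q ≤ m` carry at most half of the sum
  obtain ⟨Q, hQqi, hQS, hmQ⟩ := (hqi.and_eventually
    ((hS.eventually (lt_mem_nhds hSm.lt_top)).and (eventually_ge_atTop m))).exists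
  set F := Finset.Ioc m Q
  have hFQ : F ⊆ Finset.Icc 1 Q := fun q hq => by
    simp only [F, Finset.mem_Ioc, Finset.mem_Icc] at hq ⊢
    omega
  have hSsplit : S Q = S m + ∑ q ∈ F, μ (A q) := by
    have hI : ∀ k, Finset.Icc 1 k = Finset.Ioc 0 k := Finset.Icc_add_one_left_eq_Ioc 0
    simp only [S, hI]
    exact (Finset.sum_Ioc_consecutive _ (Nat.zero_le m) hmQ).symm
  have hSF : S Q ≤ 2 * ∑ q ∈ F, μ (A q) := by
    refine (ENNReal.add_le_add_iff_left (a := S Q) (ENNReal.sum_ne_top.2 fun q _ => hAfin q)).1 ?_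
    calc S Q + S Q = 2 * S m + 2 * ∑ q ∈ F, μ (A q) := by rw [← two_mul, hSsplit, mul_add]
      _ ≤ S Q + 2 * ∑ q ∈ F, μ (A q) := by gcongr
  have hsub : (⋃ q ∈ F, A q) ⊆ ⋃ q, ⋃ _ : N ≤ q, A q := fun x hx => by
    simp only [Set.mem_iUnion, F, Finset.mem_Ioc] at hx ⊢
    obtain ⟨q, hq, hx⟩ := hx
    exact ⟨q, (le_max_left N m₁).trans hq.1.le, hx⟩
  refine le_trans (measure_mono (Set.iUnion_mono fun v => Set.iUnion_subset fun hv =>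
    Set.subset_iUnion_of_subset ((measure_mono (Set.inter_subset_inter_left _ hsub)).trans_lt hv)
      subset_rfl)) (measure_iUnion_sparse_cells_le hB hBd hβ hβ0 hβtop hA F (S := S Q)
        (pos_of_gt hQS).ne' (ENNReal.sum_ne_top.2 fun q _ => hAfin q) ?_ fun v => ?_)
  · refine le_trans ?_ hQqi
    gcongr
    exact (Finset.sum_le_sum fun q _ => Finset.sum_le_sum_of_subset hFQ).trans
      (Finset.sum_le_sum_of_subset hFQ)
  · calc c / 2 * β * S Q ≤ c / 2 * β * (2 * ∑ q ∈ F, μ (A q)) := by gcongr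
      _ = c / 2 * 2 * β * ∑ q ∈ F, μ (A q) := by ring
      _ = ∑ q ∈ F, c * μ (A q) * β := by
          rw [ENNReal.div_mul_cancel two_ne_zero ENNReal.ofNat_ne_top, Finset.mul_sum]
          ring_nf
      _ ≤ ∑ q ∈ F, μ (A q ∩ B v) := Finset.sum_le_sum fun q hq =>
          hm₁ q ((le_max_right N m₁).trans (Finset.mem_Ioc.1 hq).1.le) v

theorem measure_iUnion_sparse_limsup_cells_le (hB : ∀ v, MeasurableSet (B v))
    (hBd : Pairwise (Disjoint on B)) (hβ : ∀ v, μ (B v) = β) (hβ0 : β ≠ 0) (hβtop : β ≠ ∞)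
    (hA : ∀ q, MeasurableSet (A q)) (hAfin : ∀ q, μ (A q) ≠ ∞)
    (hS : Tendsto (fun Q => ∑ q ∈ Finset.Icc 1 Q, μ (A q)) atTop (𝓝 ∞)) {c c₀ : ℝ≥0∞}
    (hloc : ∀ᶠ q in atTop, ∀ v, c * μ (A q) * β ≤ μ (A q ∩ B v))
    (hqi : ∃ᶠ Q in atTop, c₀ * ∑ q ∈ Finset.Icc 1 Q, ∑ r ∈ Finset.Icc 1 Q, μ (A q ∩ A r) ≤
      (∑ q ∈ Finset.Icc 1 Q, μ (A q)) ^ 2) (ε : ℝ≥0∞) :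
    μ (⋃ v, ⋃ (_ : μ ((⋂ N, ⋃ q, ⋃ _ : N ≤ q, A q) ∩ B v) < c₀ * ε * (c / 2) ^ 2 * β), B v)
      ≤ ε := by
  classical
  have hN : ∀ v, μ ((⋂ N, ⋃ q, ⋃ _ : N ≤ q, A q) ∩ B v) < c₀ * ε * (c / 2) ^ 2 * β →
      ∃ N, μ ((⋃ q, ⋃ _ : N ≤ q, A q) ∩ B v) < c₀ * ε * (c / 2) ^ 2 * β := by
    intro v hv
    rw [Set.iInter_inter, Antitone.measure_iInter
      (fun N N' h => Set.inter_subset_inter_left _ (antitone_tail A h))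
      (fun N => ((MeasurableSet.iUnion fun q => MeasurableSet.iUnion fun _ => hA q).inter
        (hB v)).nullMeasurableSet)
      ⟨0, ne_top_of_le_ne_top hβtop ((measure_mono Set.inter_subset_right).trans (hβ v).le)⟩]
      at hv
    exact iInf_lt_iff.1 hv
  choose! Nv hNv using hN
  refine le_trans (measure_mono (Set.iUnion_mono fun v => Set.iUnion_subset fun hv =>
    Set.subset_iUnion_of_subset ((measure_mono (Set.inter_subset_inter_left _
      (antitone_tail A (Finset.le_sup (Finset.mem_univ v))))).trans_lt (hNv v hv)) subset_rfl))
    (measure_iUnion_sparse_tail_cells_le hB hBd hβ hβ0 hβtop hA hAfin hS hloc hqi ε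
      (Finset.univ.sup Nv))

end SparseCells

theorem measure_le_of_le_measure_closedBall_diff {X : Type*} [MetricSpace X] [MeasurableSpace X]
    [BorelSpace X] [SecondCountableTopology X] [HasBesicovitchCovering X] [ProperSpace X]
    (μ : Measure X) [IsLocallyFiniteMeasure μ] {s : Set X} (hs : MeasurableSet s) {r : ℕ → ℝ}
    (hr : Tendsto r atTop (𝓝[>] 0)) {κ ε : ℝ≥0∞} (hκ : κ ≠ 0) {V : ℕ → Set X}
    (hV : ∀ n, μ (V n) ≤ ε)
    (hsparse : ∀ n, ∀ x ∈ s, x ∉ V n →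
      κ * μ (closedBall x (r n)) ≤ μ (closedBall x (r n) \ s)) :
    μ s ≤ ε := by
  -- a density point of `s` lies in `V n` for all large `n`
  have hae : ∀ᵐ x ∂μ, x ∈ s → ∀ᶠ n in atTop, x ∈ V n := by
    rw [← ae_restrict_iff' hs]
    filter_upwards [Besicovitch.ae_tendsto_measure_inter_div μ s, ae_restrict_mem hs]
      with x hx hxs
    have hlt : 1 - κ < 1 := ENNReal.sub_lt_self ENNReal.one_ne_top one_ne_zero hκ
    filter_upwards [(hx.comp hr).eventually (lt_mem_nhds hlt)] with n hn
    by_contra hxV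
    set B := closedBall x (r n)
    have hB : μ B ≠ ∞ := measure_closedBall_lt_top.ne
    have h1 : μ (s ∩ B) + κ * μ B ≤ μ B := calc
      _ ≤ μ (B ∩ s) + μ (B \ s) := by rw [Set.inter_comm]; gcongr; exact hsparse n x hxs hxV
      _ = μ B := measure_inter_add_sdiff B hs
    have hκB : κ * μ B ≠ ∞ := ne_top_of_le_ne_top hB (le_add_self.trans h1)
    refine hn.not_ge (ENNReal.div_le_of_le_mul ?_)
    rw [ENNReal.sub_mul fun _ _ => hB, one_mul]
    exact ENNReal.le_sub_of_add_le_right hκB h1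
  calc μ s ≤ μ (⋃ m, ⋂ n, ⋂ (_ : m ≤ n), V n) := measure_mono_ae <| hae.mono fun x hx hxs => by
        show x ∈ ⋃ m, ⋂ n, ⋂ (_ : m ≤ n), V n
        simpa only [Set.mem_iUnion, Set.mem_iInter] using eventually_atTop.1 (hx hxs)
    _ = ⨆ m, μ (⋂ n, ⋂ (_ : m ≤ n), V n) := Monotone.measure_iUnion fun m m' h =>
        Set.iInter₂_mono' fun n hn => ⟨n, h.trans hn, subset_rfl⟩
    _ ≤ ε := iSup_le fun m => (measure_mono (Set.biInter_subset_of_mem le_rfl)).trans (hV m)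

section Grid

variable {ι : Type*}

def gridBox (n : ℕ) (v : ι → Fin n) : Set (ι → ℝ) :=
  Set.univ.pi fun i => Set.Ico ((v i : ℝ) / n) ((v i : ℝ) / n + (n : ℝ)⁻¹)

lemma mem_gridBox_iff {n : ℕ} (hn : 0 < n) {v : ι → Fin n} {x : ι → ℝ} :
    x ∈ gridBox n v ↔ ∀ i, (v i : ℝ) ≤ x i * n ∧ x i * n < v i + 1 := by
  have hn' : (0 : ℝ) < n := by exact_mod_cast hn
  simp only [gridBox, Set.mem_univ_pi, Set.mem_Ico, div_le_iff₀ hn', lt_div_iff₀ hn',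
    show ∀ k : ℝ, k / n + (n : ℝ)⁻¹ = (k + 1) / n from fun k => by ring]

lemma pairwise_disjoint_gridBox (n : ℕ) : Pairwise (Disjoint on gridBox (ι := ι) n) := by
  intro v w hvw
  obtain ⟨i, hi⟩ := Function.ne_iff.1 hvw
  have hn := (v i).pos
  refine Set.disjoint_left.2 fun x hv hw => hi (Fin.ext ?_)
  obtain ⟨hv1, hv2⟩ := (mem_gridBox_iff hn).1 hv i
  obtain ⟨hw1, hw2⟩ := (mem_gridBox_iff hn).1 hw i
  have h1 : (v i : ℝ) < w i + 1 := by linarith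
  have h2 : (w i : ℝ) < v i + 1 := by linarith
  norm_cast at h1 h2
  omega

lemma gridBox_subset_unitCube (n : ℕ) (v : ι → Fin n) :
    gridBox n v ⊆ Set.univ.pi fun _ => Set.Ico 0 1 := by
  intro x hx i _
  have hn := (v i).pos
  have hn' : (0 : ℝ) < n := by exact_mod_cast hn
  have hvi : (v i : ℝ) + 1 ≤ n := by exact_mod_cast (v i).isLt
  obtain ⟨h1, h2⟩ := (mem_gridBox_iff hn).1 hx i
  constructor <;> nlinarith

lemma exists_mem_gridBox {n : ℕ} (hn : 0 < n) {x : ι → ℝ}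
    (hx : x ∈ Set.univ.pi fun _ => Set.Ico (0 : ℝ) 1) : ∃ v : ι → Fin n, x ∈ gridBox n v := by
  have hn' : (0 : ℝ) < n := by exact_mod_cast hn
  have hx' : ∀ i, 0 ≤ x i * n ∧ x i * n < n := fun i => by
    obtain ⟨h1, h2⟩ := hx i (Set.mem_univ i)
    exact ⟨by positivity, by nlinarith⟩
  exact ⟨fun i => ⟨⌊x i * n⌋₊, (Nat.floor_lt (hx' i).1).2 (hx' i).2⟩, (mem_gridBox_iff hn).2
    fun i => ⟨Nat.floor_le (hx' i).1, Nat.lt_floor_add_one _⟩⟩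

variable [Fintype ι]

lemma measurableSet_gridBox (n : ℕ) (v : ι → Fin n) : MeasurableSet (gridBox n v) :=
  MeasurableSet.univ_pi fun _ => measurableSet_Ico

lemma gridBox_subset_closedBall {n : ℕ} {v : ι → Fin n} {x : ι → ℝ} (hx : x ∈ gridBox n v) :
    gridBox n v ⊆ closedBall x (n : ℝ)⁻¹ := by
  intro z hz
  refine (dist_pi_le_iff (by positivity)).2 fun i => ?_
  obtain ⟨hx1, hx2⟩ := hx i (Set.mem_univ i)
  obtain ⟨hz1, hz2⟩ := hz i (Set.mem_univ i)
  rw [Real.dist_eq, abs_le]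
  constructor <;> linarith

lemma volume_gridBox (n : ℕ) (v : ι → Fin n) :
    volume (gridBox n v) = ENNReal.ofReal ((n : ℝ)⁻¹) ^ Fintype.card ι := by
  simp [gridBox, Real.volume_pi_Ico]

lemma volume_closedBall_eq_two_pow_mul_volume_gridBox (x : ι → ℝ) (n : ℕ) (v : ι → Fin n) :
    volume (closedBall x (n : ℝ)⁻¹) = 2 ^ Fintype.card ι * volume (gridBox n v) := by
  rw [Real.volume_pi_closedBall x (by positivity), volume_gridBox, mul_pow,
    ENNReal.ofReal_mul (by positivity), ENNReal.ofReal_pow zero_le_two,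
    ENNReal.ofReal_pow (by positivity), ENNReal.ofReal_ofNat]

end Grid

section QuasiIndependence

variable {ι : Type*} [Fintype ι] {A : ℕ → Set (ι → ℝ)}

theorem volume_unitCube_diff_limsup_le (hA : ∀ q, MeasurableSet (A q))
    (hAfin : ∀ q, volume (A q) ≠ ∞)
    (hS : Tendsto (fun Q => ∑ q ∈ Finset.Icc 1 Q, volume (A q)) atTop (𝓝 ∞))
    {c c₀ : ℝ≥0∞} (hc : c ≠ 0) (hc₀ : c₀ ≠ 0)
    (hloc : ∀ n, 0 < n → ∀ᶠ q in atTop, ∀ v : ι → Fin n,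
      c * volume (A q) * volume (gridBox n v) ≤ volume (A q ∩ gridBox n v))
    (hqi : ∃ᶠ Q in atTop, c₀ * ∑ q ∈ Finset.Icc 1 Q, ∑ r ∈ Finset.Icc 1 Q, volume (A q ∩ A r) ≤
      (∑ q ∈ Finset.Icc 1 Q, volume (A q)) ^ 2) {ε : ℝ≥0∞} (hε : ε ≠ 0) :
    volume ((Set.univ.pi fun _ => Set.Ico (0 : ℝ) 1) \ ⋂ N, ⋃ q, ⋃ _ : N ≤ q, A q) ≤ ε := by
  classical
  set E := ⋂ N, ⋃ q, ⋃ _ : N ≤ q, A q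
  set κ : ℝ≥0∞ := c₀ * ε * (c / 2) ^ 2
  set β : ℕ → ℝ≥0∞ := fun n => ENNReal.ofReal ((n : ℝ)⁻¹) ^ Fintype.card ι
  have hκ : κ ≠ 0 := mul_ne_zero (mul_ne_zero hc₀ hε)
    (pow_ne_zero _ (ENNReal.div_ne_zero.2 ⟨hc, ENNReal.ofNat_ne_top⟩))
  have hE : MeasurableSet E :=
    MeasurableSet.iInter fun N => MeasurableSet.iUnion fun q => MeasurableSet.iUnion fun _ => hA q
  refine measure_le_of_le_measure_closedBall_diff volume
    ((MeasurableSet.univ_pi fun _ => measurableSet_Ico).diff hE)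
    (r := fun n => ((n + 1 : ℕ) : ℝ)⁻¹) ?_ (κ := κ / 2 ^ Fintype.card ι)
    (ENNReal.div_ne_zero.2 ⟨hκ, ENNReal.pow_ne_top ENNReal.ofNat_ne_top⟩)
    (V := fun n => ⋃ v : ι → Fin (n + 1),
      ⋃ (_ : volume (E ∩ gridBox (n + 1) v) < κ * β (n + 1)), gridBox (n + 1) v)
    (fun n => ?_) (fun n x hx hxV => ?_)
  · exact tendsto_inv_atTop_nhdsGT_zero.comp
      (tendsto_natCast_atTop_atTop.comp (tendsto_add_atTop_nat 1))
  · exact measure_iUnion_sparse_limsup_cells_le (measurableSet_gridBox (n + 1))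
      (pairwise_disjoint_gridBox (n + 1)) (volume_gridBox (n + 1))
      (pow_ne_zero _ (ENNReal.ofReal_pos.2 (by positivity)).ne')
      (ENNReal.pow_ne_top ENNReal.ofReal_ne_top) hA hAfin hS
      ((hloc (n + 1) n.succ_pos).mono fun q hq v => by simpa only [volume_gridBox] using hq v)
      hqi ε
  · obtain ⟨v, hv⟩ := exists_mem_gridBox n.succ_pos hx.1
    have hdense : κ * β (n + 1) ≤ volume (E ∩ gridBox (n + 1) v) :=
      not_lt.1 fun h => hxV (Set.mem_iUnion₂.2 ⟨v, h, hv⟩)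
    calc κ / 2 ^ Fintype.card ι * volume (closedBall x ((n + 1 : ℕ) : ℝ)⁻¹)
        = κ / 2 ^ Fintype.card ι * 2 ^ Fintype.card ι * β (n + 1) := by
          rw [volume_closedBall_eq_two_pow_mul_volume_gridBox x _ v, volume_gridBox, mul_assoc]
      _ = κ * β (n + 1) := by
          rw [ENNReal.div_mul_cancel (pow_ne_zero _ two_ne_zero)
            (ENNReal.pow_ne_top ENNReal.ofNat_ne_top)]
      _ ≤ volume (E ∩ gridBox (n + 1) v) := hdense
      _ ≤ volume (closedBall x ((n + 1 : ℕ) : ℝ)⁻¹ \ ((Set.univ.pi fun _ => Set.Ico 0 1) \ E)) :=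
          measure_mono fun z hz => ⟨gridBox_subset_closedBall hv hz.2, fun h => h.2 hz.1⟩

theorem volume_limsup_eq_one_of_quasiIndependent (hA : ∀ q, MeasurableSet (A q))
    (hAcube : ∀ q, A q ⊆ Set.univ.pi fun _ => Set.Ico 0 1) (hdiv : ∑' q, volume (A q) = ∞)
    {c : ℝ≥0∞} (hc : c ≠ 0)
    (hloc : ∀ n, 0 < n → ∀ᶠ q in atTop, ∀ v : ι → Fin n,
      c * volume (A q) * volume (gridBox n v) ≤ volume (A q ∩ gridBox n v))
    (hqi : 0 < atTop.limsup fun Q : ℕ => (∑ q ∈ Finset.Icc 1 Q, volume (A q)) ^ 2 /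
      ∑ q ∈ Finset.Icc 1 Q, ∑ r ∈ Finset.Icc 1 Q, volume (A q ∩ A r)) :
    volume (⋂ N, ⋃ q, ⋃ _ : N ≤ q, A q) = 1 := by
  set cube : Set (ι → ℝ) := Set.univ.pi fun _ => Set.Ico 0 1
  set E := ⋂ N, ⋃ q, ⋃ _ : N ≤ q, A q
  have hcube : volume cube = 1 := by simp [cube, Real.volume_pi_Ico]
  have hAfin : ∀ q, volume (A q) ≠ ∞ :=
    fun q => ne_top_of_le_ne_top (hcube ▸ ENNReal.one_ne_top) (measure_mono (hAcube q))
  have hE : MeasurableSet E :=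
    MeasurableSet.iInter fun N => MeasurableSet.iUnion fun q => MeasurableSet.iUnion fun _ => hA q
  obtain ⟨c₀, hc₀, hqi⟩ := exists_frequently_mul_le_of_pos_limsup_div hqi
  have hs : volume (cube \ E) = 0 := by
    refine le_antisymm (ENNReal.le_of_forall_pos_le_add fun ε hε _ => ?_) bot_le
    simpa using volume_unitCube_diff_limsup_le hA hAfin
      (tendsto_sum_Icc_one_of_tsum_eq_top (hAfin 0) hdiv) hc hc₀ hloc hqi
      (ENNReal.coe_ne_zero.2 hε.ne')
  calc volume E = volume E + volume (cube \ E) := by rw [hs, add_zero]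
    _ = volume (E ∪ cube) := measure_add_sdiff hE.nullMeasurableSet _
    _ = 1 := by rw [Set.union_eq_right.2 ((Set.iInter_subset _ 0).trans
          (Set.iUnion₂_subset fun q _ => hAcube q)), hcube]

end QuasiIndependence

section LatticeBalls

variable {ι : Type*} [Fintype ι]

def latticeBall (q : ℕ) (y : ι → ℝ) (r : ℝ) (p : ι → ℤ) : Set (ι → ℝ) :=
  ball ((q : ℝ)⁻¹ • ((fun i => (p i : ℝ)) + y)) (r / q)

lemma mem_latticeBall_iff {q : ℕ} (hq : 0 < q) {y x : ι → ℝ} {r : ℝ} {p : ι → ℤ} :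
    x ∈ latticeBall q y r p ↔ ‖(q : ℝ) • x - (fun i => (p i : ℝ)) - y‖ < r := by
  have hq' : (0 : ℝ) < q := by exact_mod_cast hq
  have key : x - (q : ℝ)⁻¹ • ((fun i => (p i : ℝ)) + y) =
      (q : ℝ)⁻¹ • ((q : ℝ) • x - (fun i => (p i : ℝ)) - y) := by
    rw [smul_sub, smul_sub, inv_smul_smul₀ hq'.ne', smul_add]
    abel
  rw [latticeBall, mem_ball, dist_eq_norm, key, norm_smul, norm_inv, Real.norm_natCast,
    ← div_eq_inv_mul, div_lt_div_iff_of_pos_right hq']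

lemma abs_sub_lt_of_mem_latticeBall {q : ℕ} (hq : 0 < q) {y x : ι → ℝ} {r : ℝ} {p : ι → ℤ}
    (hx : x ∈ latticeBall q y r p) (i : ι) : |q * x i - p i - y i| < r :=
  (norm_le_pi_norm _ i).trans_lt ((mem_latticeBall_iff hq).1 hx)

lemma pairwise_disjoint_latticeBall {q : ℕ} (hq : 0 < q) (y : ι → ℝ) {r : ℝ} (hr : r ≤ 1 / 2) :
    Pairwise (Disjoint on latticeBall q y r) := by
  intro p p' hpp'
  obtain ⟨i, hi⟩ := Function.ne_iff.1 hpp'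
  refine Set.disjoint_left.2 fun x hx hx' => hi ?_
  have h1 := abs_sub_lt_of_mem_latticeBall hq hx i
  have h2 := abs_sub_lt_of_mem_latticeBall hq hx' i
  have h3 : |((p i - p' i : ℤ) : ℝ)| < 1 := by
    push_cast
    rw [abs_lt] at h1 h2 ⊢
    constructor <;> linarith
  rwa [← Int.cast_abs, ← Int.cast_one, Int.cast_lt, Int.abs_lt_one_iff, sub_eq_zero] at h3

lemma volume_latticeBall {q : ℕ} (hq : 0 < q) (y : ι → ℝ) {r : ℝ} (hr : 0 < r) (p : ι → ℤ) :
    volume (latticeBall q y r p) = ENNReal.ofReal ((2 * r / q) ^ Fintype.card ι) := by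
  rw [latticeBall, Real.volume_pi_ball _ (by positivity), mul_div_assoc]

lemma volume_latticeBall_le (q : ℕ) (y : ι → ℝ) {r : ℝ} (hr : 0 ≤ r) (p : ι → ℤ) :
    volume (latticeBall q y r p) ≤ ENNReal.ofReal ((2 * r / q) ^ Fintype.card ι) := by
  rw [mul_div_assoc, ← Real.volume_pi_closedBall _ (by positivity)]
  exact measure_mono ball_subset_closedBall

end LatticeBalls

section Window

variable {ι : Type*} [Fintype ι] [DecidableEq ι]

noncomputable def window (t : ι → ℤ) (L : ℕ) : Finset (ι → ℤ) :=
  Fintype.piFinset fun i => Finset.Ico (t i) (t i + L)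

lemma mem_window {t p : ι → ℤ} {L : ℕ} : p ∈ window t L ↔ ∀ i, t i ≤ p i ∧ p i < t i + L := by
  simp [window, Fintype.mem_piFinset]

lemma card_window (t : ι → ℤ) (L : ℕ) : (window t L).card = L ^ Fintype.card ι := by
  simp [window, Fintype.card_piFinset]

lemma latticeBall_subset_pi_Ico {q : ℕ} (hq : 0 < q) (y : ι → ℝ) {r : ℝ} (hr : r ≤ 1 / 2)
    (c : ι → ℝ) {h : ℝ} {L : ℕ} (hL : (L : ℝ) + 2 ≤ q * h) {p : ι → ℤ}
    (hp : p ∈ window (fun i => ⌈q * c i - y i⌉ + 1) L) :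
    latticeBall q y r p ⊆ Set.univ.pi fun i => Set.Ico (c i) (c i + h) := by
  have hq' : (0 : ℝ) < q := by exact_mod_cast hq
  intro x hx i _
  obtain ⟨hp1, hp2⟩ := mem_window.1 hp i
  have hx' := abs_lt.1 (abs_sub_lt_of_mem_latticeBall hq hx i)
  have hp1' : (⌈q * c i - y i⌉ : ℝ) + 1 ≤ p i := by exact_mod_cast hp1
  have hp2' : (p i : ℝ) + 1 ≤ ⌈q * c i - y i⌉ + 1 + L := by exact_mod_cast hp2
  have hc1 := Int.le_ceil (q * c i - y i)
  have hc2 := Int.ceil_lt_add_one (q * c i - y i)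
  constructor
  · refine le_of_mul_le_mul_left ?_ hq'
    linarith
  · refine lt_of_mul_lt_mul_left ?_ hq'.le
    nlinarith

end Window

section Sieve

lemma card_filter_dvd_mul_add_le {ℓ : ℕ} (hℓ : ℓ.Prime) {b : ℤ} (hb : ¬ (ℓ : ℤ) ∣ b) (a s : ℤ)
    (L : ℕ) :
    (((Finset.Ico s (s + L)).filter fun t => (ℓ : ℤ) ∣ b * t + a).card : ℝ) ≤ L / ℓ + 1 := by
  set T := (Finset.Ico s (s + L)).filter fun t => (ℓ : ℤ) ∣ b * t + a
  rcases T.eq_empty_or_nonempty with hT | ⟨t₀, ht₀⟩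
  · rw [hT, Finset.card_empty, Nat.cast_zero]
    positivity
  -- `b` is invertible mod `ℓ`, so all solutions are congruent to `t₀`
  have hsub : T ⊆ (Finset.Ico s (s + L)).filter (· ≡ t₀ [ZMOD ℓ]) := by
    intro t ht
    simp only [T, Finset.mem_filter] at ht ht₀ ⊢
    refine ⟨ht.1, (Int.modEq_iff_dvd.2 ?_).symm⟩
    have h := dvd_sub ht.2 ht₀.2
    rw [show b * t + a - (b * t₀ + a) = b * (t - t₀) by ring] at h
    exact ((Nat.prime_iff_prime_int.1 hℓ).dvd_or_dvd h).resolve_left hb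
  have hcard := Int.Ico_filter_modEq_card s (s + L) (r := ℓ) (by exact_mod_cast hℓ.pos) t₀
  have hT : (T.card : ℤ) ≤ _ := (Nat.cast_le.2 (Finset.card_le_card hsub)).trans hcard.le
  have hℓ' : (0 : ℚ) < ℓ := by exact_mod_cast hℓ.pos
  have hq : ((T.card : ℤ) : ℚ) ≤ L / ℓ + 1 := by
    refine (Int.cast_le.2 hT).trans ?_
    push_cast
    refine max_le ?_ (by positivity)
    have h1 := Int.ceil_lt_add_one (((s : ℚ) + L - t₀) / ℓ)
    have h2 := Int.le_ceil (((s : ℚ) - t₀) / ℓ)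
    have h3 : ((s : ℚ) + L - t₀) / ℓ - (s - t₀) / ℓ = L / ℓ := by ring
    linarith
  have hr := (Rat.cast_le (K := ℝ)).2 hq
  push_cast at hr
  exact hr

lemma sum_inv_sq_le_of_two_le {S : Finset ℕ} (hS : ∀ n ∈ S, 2 ≤ n) :
    ∑ n ∈ S, 1 / (n : ℝ) ^ 2 ≤ 2 / 3 := by
  have h1 : 1 ∉ S := fun h => by have := hS 1 h; omega
  have hsum := sum_le_hasSum (insert 1 S) (fun n _ => by positivity) hasSum_zeta_two
  rw [Finset.sum_insert h1] at hsum
  have hπ : π ^ 2 < 10 := by nlinarith [pi_lt_d2, pi_pos]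
  rw [Nat.cast_one, one_pow, div_one] at hsum
  linarith

lemma card_filter_gcdVec_ne_one_le {q b : ℕ} (hq : 0 < q) {a : Fin 2 → ℤ}
    (hab : Nat.gcd (Int.gcd (a 0) (a 1)) b = 1) (t : Fin 2 → ℤ) (L : ℕ) :
    (((window t L).filter fun p => gcdVec q (fun i => (b : ℤ) * p i + a i) ≠ 1).card : ℝ) ≤
      ∑ ℓ ∈ q.primeFactors, ((L : ℝ) / ℓ + 1) ^ 2 := by
  set fiber : ℕ → Finset (Fin 2 → ℤ) := fun ℓ => Fintype.piFinset fun i =>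
    (Finset.Ico (t i) (t i + L)).filter fun s => (ℓ : ℤ) ∣ b * s + a i
  have hcover : (window t L).filter (fun p => gcdVec q (fun i => (b : ℤ) * p i + a i) ≠ 1) ⊆
      q.primeFactors.biUnion fiber := by
    intro p hp
    obtain ⟨hpW, hbad⟩ := Finset.mem_filter.1 hp
    obtain ⟨ℓ, hℓ, hℓg⟩ := Nat.exists_prime_and_dvd hbad
    have hℓv : (ℓ : ℤ) ∣ Int.gcd (b * p 0 + a 0) (b * p 1 + a 1) :=
      Int.natCast_dvd_natCast.2 (hℓg.trans (Nat.gcd_dvd_right _ _))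
    refine Finset.mem_biUnion.2 ⟨ℓ, Nat.mem_primeFactors.2 ⟨hℓ, hℓg.trans (Nat.gcd_dvd_left _ _),
      hq.ne'⟩, Fintype.mem_piFinset.2 fun i =>
        Finset.mem_filter.2 ⟨Fintype.mem_piFinset.1 hpW i, ?_⟩⟩
    fin_cases i
    · exact hℓv.trans (Int.gcd_dvd_left _ _)
    · exact hℓv.trans (Int.gcd_dvd_right _ _)
  have hfiber : ∀ ℓ ∈ q.primeFactors, ((fiber ℓ).card : ℝ) ≤ ((L : ℝ) / ℓ + 1) ^ 2 := by
    intro ℓ hℓ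
    have hℓ := Nat.prime_of_mem_primeFactors hℓ
    by_cases hb : (ℓ : ℤ) ∣ b
    · have : fiber ℓ = ∅ := by
        refine Finset.eq_empty_of_forall_notMem fun p hp => hℓ.one_lt.ne' (Nat.dvd_one.1 ?_)
        simp only [fiber, Fintype.mem_piFinset, Finset.mem_filter] at hp
        have ha : ∀ i, (ℓ : ℤ) ∣ a i := fun i => (dvd_add_right (hb.mul_right _)).1 (hp i).2
        exact hab ▸ Nat.dvd_gcd (Int.dvd_gcd (ha 0) (ha 1)) (Int.natCast_dvd_natCast.1 hb)
      rw [this, Finset.card_empty, Nat.cast_zero]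
      positivity
    · rw [Fintype.card_piFinset, Fin.prod_univ_two, Nat.cast_mul, sq]
      exact mul_le_mul (card_filter_dvd_mul_add_le hℓ hb _ _ L)
        (card_filter_dvd_mul_add_le hℓ hb _ _ L) (by positivity) (by positivity)
  calc _ ≤ ((q.primeFactors.biUnion fiber).card : ℝ) := by
        exact_mod_cast Finset.card_le_card hcover
    _ ≤ ∑ ℓ ∈ q.primeFactors, ((fiber ℓ).card : ℝ) := by exact_mod_cast Finset.card_biUnion_le
    _ ≤ _ := Finset.sum_le_sum hfiber

lemma le_card_filter_gcdVec_eq_one {q b : ℕ} (hq : 0 < q) {a : Fin 2 → ℤ}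
    (hab : Nat.gcd (Int.gcd (a 0) (a 1)) b = 1) (t : Fin 2 → ℤ) (L : ℕ) :
    (L : ℝ) ^ 2 / 3 - (L + 1) * q.primeFactors.card ≤
      ((window t L).filter fun p => gcdVec q (fun i => (b : ℤ) * p i + a i) = 1).card := by
  have hsplit := Finset.card_filter_add_card_filter_not (s := window t L)
    (p := fun p => gcdVec q (fun i => (b : ℤ) * p i + a i) = 1)
  rw [card_window, Fintype.card_fin] at hsplit
  have hbad := card_filter_gcdVec_ne_one_le hq hab t L
  have hterm : ∀ ℓ ∈ q.primeFactors,
      ((L : ℝ) / ℓ + 1) ^ 2 ≤ L ^ 2 * (1 / (ℓ : ℝ) ^ 2) + (L + 1) := by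
    intro ℓ hℓ
    have hℓ2 : (2 : ℝ) ≤ ℓ := by exact_mod_cast (Nat.prime_of_mem_primeFactors hℓ).two_le
    have h : (L : ℝ) / ℓ ≤ L / 2 := div_le_div_of_nonneg_left (by positivity) two_pos hℓ2
    have h' : ((L : ℝ) / ℓ + 1) ^ 2 = L ^ 2 * (1 / (ℓ : ℝ) ^ 2) + 2 * (L / ℓ) + 1 := by
      field_simp
      ring
    linarith
  have hsum : ∑ ℓ ∈ q.primeFactors, ((L : ℝ) / ℓ + 1) ^ 2 ≤
      (L : ℝ) ^ 2 * (2 / 3) + ((L : ℝ) + 1) * q.primeFactors.card := by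
    refine (Finset.sum_le_sum hterm).trans ?_
    rw [Finset.sum_add_distrib, ← Finset.mul_sum, Finset.sum_const, nsmul_eq_mul,
      mul_comm _ ((L : ℝ) + 1)]
    gcongr
    exact sum_inv_sq_le_of_two_le fun ℓ hℓ => (Nat.prime_of_mem_primeFactors hℓ).two_le
  have hcast :
      (((window t L).filter fun p => gcdVec q (fun i => (b : ℤ) * p i + a i) = 1).card : ℝ) +
        ((window t L).filter fun p => gcdVec q (fun i => (b : ℤ) * p i + a i) ≠ 1).card =
      L ^ 2 := by
    exact_mod_cast hsplit
  linarith

lemma two_pow_card_primeFactors_le {q : ℕ} (hq : q ≠ 0) : 2 ^ q.primeFactors.card ≤ q :=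
  (Finset.pow_card_le_prod _ id 2 fun _ hp => (Nat.prime_of_mem_primeFactors hp).two_le).trans
    (Nat.le_of_dvd (Nat.pos_of_ne_zero hq) (Nat.prod_primeFactors_dvd q))

lemma isLittleO_card_primeFactors :
    (fun q : ℕ => (q.primeFactors.card : ℝ)) =o[atTop] fun q => (q : ℝ) := by
  refine Asymptotics.IsBigO.trans_isLittleO (g := fun q : ℕ => log q) ?_
    (isLittleO_log_id_atTop.comp_tendsto tendsto_natCast_atTop_atTop)
  refine Asymptotics.IsBigO.of_bound (log 2)⁻¹ ((eventually_ne_atTop 0).mono fun q hq => ?_)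
  have h := Real.log_le_log (by positivity) (by exact_mod_cast two_pow_card_primeFactors_le hq :
    ((2 : ℝ) ^ q.primeFactors.card) ≤ q)
  rw [Real.log_pow] at h
  rw [Real.norm_natCast, Real.norm_of_nonneg (Real.log_natCast_nonneg q), ← div_eq_inv_mul,
    le_div_iff₀ (Real.log_pos one_lt_two)]
  exact h

lemma eventually_card_primeFactors_le {h : ℝ} (hh : 0 < h) :
    ∀ᶠ q : ℕ in atTop, 12 * ((q.primeFactors.card : ℝ) + 2) ≤ q * h := by
  filter_upwards [isLittleO_card_primeFactors.bound (by positivity : 0 < h / 24),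
    tendsto_natCast_atTop_atTop.eventually_ge_atTop (48 / h)] with q h1 h2
  rw [Real.norm_natCast, Real.norm_natCast] at h1
  rw [div_le_iff₀ hh] at h2
  linarith

end Sieve

lemma mem_Atilde_iff {ψ : ℕ → ℝ} {y : Fin 2 → ℝ} {a : Fin 2 → ℤ} {b q : ℕ} (hq : 0 < q)
    {x : Fin 2 → ℝ} : x ∈ Atilde ψ y a b q ↔ x ∈ unitBox ∧
      ∃ p, gcdVec q (fun i => (b : ℤ) * p i + a i) = 1 ∧ x ∈ latticeBall q y (ψ q) p := by
  simp only [Atilde, Set.mem_sep_iff, mem_latticeBall_iff hq, and_comm]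

lemma measurableSet_Atilde (ψ : ℕ → ℝ) (y : Fin 2 → ℝ) (a : Fin 2 → ℤ) (b q : ℕ) :
    MeasurableSet (Atilde ψ y a b q) := by
  have h : Atilde ψ y a b q = unitBox ∩ ⋃ p : Fin 2 → ℤ,
      ⋃ (_ : gcdVec q (fun i => (b : ℤ) * p i + a i) = 1),
        {x | ‖(q : ℝ) • x - (fun i => (p i : ℝ)) - y‖ < ψ q} := by
    ext x
    simp only [Atilde, Set.mem_inter_iff, Set.mem_iUnion, Set.mem_ofPred_eq,
      exists_prop, and_comm]
  rw [h]
  exact (MeasurableSet.univ_pi fun _ => measurableSet_Ico).inter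
    (MeasurableSet.iUnion fun p => MeasurableSet.iUnion fun _ =>
      (isOpen_lt (by fun_prop) continuous_const).measurableSet)

lemma volume_Atilde_le {ψ : ℕ → ℝ} (y : Fin 2 → ℝ) (a : Fin 2 → ℤ) (b : ℕ) {q : ℕ}
    (hq : 0 < q) (hψ0 : 0 ≤ ψ q) (hψ : ψ q ≤ 1 / 2) :
    volume (Atilde ψ y a b q) ≤ ENNReal.ofReal (36 * ψ q ^ 2) := by
  have hq' : (0 : ℝ) < q := by exact_mod_cast hq
  -- only the `(q + 2)²` lattice points `p` with `⌊-y⌋ ≤ p < ⌊-y⌋ + q + 2` can contribute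
  have hcover :
      Atilde ψ y a b q ⊆ ⋃ p ∈ window (fun i => ⌊-y i⌋) (q + 2), latticeBall q y (ψ q) p := by
    intro x hx
    obtain ⟨hxu, p, -, hxp⟩ := (mem_Atilde_iff hq).1 hx
    refine Set.mem_biUnion (mem_window.2 fun i => ?_) hxp
    obtain ⟨hx0, hx1⟩ := hxu i (Set.mem_univ i)
    have h := abs_lt.1 (abs_sub_lt_of_mem_latticeBall hq hxp i)
    have hfl := Int.floor_le (-y i)
    have hfl' := Int.lt_floor_add_one (-y i)
    constructor
    · have : ((⌊-y i⌋ : ℤ) : ℝ) < p i + 1 := by nlinarith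
      exact_mod_cast Int.lt_add_one_iff.1 (by exact_mod_cast this)
    · have : (p i : ℝ) < ⌊-y i⌋ + (q + 2 : ℕ) := by push_cast; nlinarith
      exact_mod_cast this
  calc volume (Atilde ψ y a b q)
      ≤ ∑ p ∈ window (fun i => ⌊-y i⌋) (q + 2), volume (latticeBall q y (ψ q) p) :=
        (measure_mono hcover).trans (measure_biUnion_finset_le _ _)
    _ ≤ ∑ p ∈ window (fun i => ⌊-y i⌋) (q + 2), ENNReal.ofReal ((2 * ψ q / q) ^ 2) :=
        Finset.sum_le_sum fun p _ => volume_latticeBall_le q y hψ0 p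
    _ = ENNReal.ofReal ((q + 2) ^ 2 * (2 * ψ q / q) ^ 2) := by
        rw [Finset.sum_const, card_window, nsmul_eq_mul, ENNReal.ofReal_mul (by positivity)]
        norm_cast
    _ ≤ ENNReal.ofReal (36 * ψ q ^ 2) := by
        refine ENNReal.ofReal_le_ofReal ?_
        rw [div_pow, ← mul_div_assoc, div_le_iff₀ (by positivity)]
        have hq1 : (1 : ℝ) ≤ q := by exact_mod_cast hq
        have h : ((q : ℝ) + 2) ^ 2 ≤ 9 * q ^ 2 := by nlinarith
        nlinarith [mul_le_mul_of_nonneg_right h (sq_nonneg (2 * ψ q))]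

lemma le_volume_Atilde_inter_pi_Ico {ψ : ℕ → ℝ} (y : Fin 2 → ℝ) {a : Fin 2 → ℤ} {b q : ℕ}
    (hq : 0 < q) (hψ0 : 0 ≤ ψ q) (hψ : ψ q ≤ 1 / 2) (hab : Nat.gcd (Int.gcd (a 0) (a 1)) b = 1)
    {c : Fin 2 → ℝ} {h : ℝ} (hbox : (Set.univ.pi fun i => Set.Ico (c i) (c i + h)) ⊆ unitBox)
    (hqh : 12 * (q.primeFactors.card + 2) ≤ q * h) :
    ENNReal.ofReal (h ^ 2 * ψ q ^ 2) ≤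
      volume (Atilde ψ y a b q ∩ Set.univ.pi fun i => Set.Ico (c i) (c i + h)) := by
  rcases hψ0.eq_or_lt with hψ0 | hψ0
  · simp [← hψ0]
  have hq' : (0 : ℝ) < q := by exact_mod_cast hq
  have hω0 : (0 : ℝ) ≤ q.primeFactors.card := Nat.cast_nonneg _
  set L := ⌊(q : ℝ) * h⌋₊ - 2
  have hL : q * h - 3 ≤ L ∧ (L : ℝ) + 2 ≤ q * h := by
    have h1 := Nat.floor_le (by linarith : 0 ≤ (q : ℝ) * h)
    have h2 := Nat.lt_floor_add_one ((q : ℝ) * h)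
    have h3 : 2 ≤ ⌊(q : ℝ) * h⌋₊ := Nat.le_floor (by norm_num; linarith)
    simp only [L, Nat.cast_sub h3, Nat.cast_ofNat]
    constructor <;> linarith
  set t : Fin 2 → ℤ := fun i => ⌈q * c i - y i⌉ + 1
  set G := (window t L).filter fun p => gcdVec q (fun i => (b : ℤ) * p i + a i) = 1
  have hG : (q * h) ^ 2 / 4 ≤ G.card := by
    nlinarith [le_card_filter_gcdVec_eq_one hq hab t L, mul_le_mul_of_nonneg_right hL.2 hω0]
  calc ENNReal.ofReal (h ^ 2 * ψ q ^ 2) ≤ ENNReal.ofReal (G.card * (2 * ψ q / q) ^ 2) := by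
        refine ENNReal.ofReal_le_ofReal ?_
        rw [div_pow, mul_div_assoc', le_div_iff₀ (by positivity)]
        nlinarith [mul_le_mul_of_nonneg_right hG (sq_nonneg (2 * ψ q))]
    _ = ∑ p ∈ G, volume (latticeBall q y (ψ q) p) := by
        rw [Finset.sum_congr rfl fun p _ => volume_latticeBall hq y hψ0 p, Finset.sum_const,
          nsmul_eq_mul, Fintype.card_fin, ENNReal.ofReal_mul (by positivity),
          ENNReal.ofReal_natCast]
    _ = volume (⋃ p ∈ G, latticeBall q y (ψ q) p) :=
        (measure_biUnion_finset (fun p _ p' _ hpp' => pairwise_disjoint_latticeBall hq y hψ hpp')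
          fun p _ => measurableSet_ball).symm
    _ ≤ volume (Atilde ψ y a b q ∩ Set.univ.pi fun i => Set.Ico (c i) (c i + h)) := by
        refine measure_mono (Set.iUnion₂_subset fun p hp x hx => ?_)
        obtain ⟨hpW, hpG⟩ := Finset.mem_filter.1 hp
        have hxbox := latticeBall_subset_pi_Ico hq y hψ c hL.2 hpW hx
        exact ⟨(mem_Atilde_iff hq).2 ⟨hbox hxbox, p, hpG, hx⟩, hxbox⟩

lemma eventually_ofReal_le_volume_Atilde_inter_gridBox {ψ : ℕ → ℝ} (hψ : ∀ q, 0 ≤ ψ q)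
    (hhalf : ∀ q, ψ q ≤ 1 / 2) (y : Fin 2 → ℝ) {a : ℕ → Fin 2 → ℤ} {b : ℕ → ℕ}
    (hab : ∀ q, Nat.gcd (Int.gcd (a q 0) (a q 1)) (b q) = 1) {n : ℕ} (hn : 0 < n) :
    ∀ᶠ q in atTop, ∀ v : Fin 2 → Fin n, ENNReal.ofReal ((n : ℝ)⁻¹ ^ 2 * ψ q ^ 2) ≤
      volume (Atilde ψ y (a q) (b q) q ∩ gridBox n v) := by
  filter_upwards [eventually_card_primeFactors_le (inv_pos.2 (Nat.cast_pos.2 hn)),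
    eventually_gt_atTop 0] with q hq hq0 v
  exact le_volume_Atilde_inter_pi_Ico y hq0 (hψ q) (hhalf q) (hab q)
    (gridBox_subset_unitCube n v) hq

lemma eventually_mul_volume_Atilde_mul_volume_gridBox_le {ψ : ℕ → ℝ} (hψ : ∀ q, 0 ≤ ψ q)
    (hhalf : ∀ q, ψ q ≤ 1 / 2) (y : Fin 2 → ℝ) {a : ℕ → Fin 2 → ℤ} {b : ℕ → ℕ}
    (hab : ∀ q, Nat.gcd (Int.gcd (a q 0) (a q 1)) (b q) = 1) {n : ℕ} (hn : 0 < n) :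
    ∀ᶠ q in atTop, ∀ v : Fin 2 → Fin n,
      ENNReal.ofReal (1 / 36) * volume (Atilde ψ y (a q) (b q) q) * volume (gridBox n v) ≤
        volume (Atilde ψ y (a q) (b q) q ∩ gridBox n v) := by
  filter_upwards [eventually_ofReal_le_volume_Atilde_inter_gridBox hψ hhalf y hab hn,
    eventually_gt_atTop 0] with q hq hq0 v
  calc ENNReal.ofReal (1 / 36) * volume (Atilde ψ y (a q) (b q) q) * volume (gridBox n v)
      ≤ ENNReal.ofReal (1 / 36) * ENNReal.ofReal (36 * ψ q ^ 2) *
          ENNReal.ofReal ((n : ℝ)⁻¹) ^ 2 := by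
        rw [volume_gridBox, Fintype.card_fin]
        gcongr
        exact volume_Atilde_le y (a q) (b q) hq0 (hψ q) (hhalf q)
    _ = ENNReal.ofReal ((n : ℝ)⁻¹ ^ 2 * ψ q ^ 2) := by
        rw [← ENNReal.ofReal_pow (by positivity), ← ENNReal.ofReal_mul (by norm_num),
          ← ENNReal.ofReal_mul (by positivity)]
        ring_nf
    _ ≤ volume (Atilde ψ y (a q) (b q) q ∩ gridBox n v) := hq v

theorem full_measure_of_quasi_independent_general
    (ψ : ℕ → ℝ) (hψ : ∀ n, 0 ≤ ψ n)
    (hhalf : ∀ q, ψ q ≤ 1 / 2) (y : Fin 2 → ℝ)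
    (a : ℕ → Fin 2 → ℤ) (b : ℕ → ℕ)
    (hgcdab : ∀ q, Nat.gcd (Int.gcd (a q 0) (a q 1)) (b q) = 1)
    (hdiv : ¬ Summable (fun q : ℕ => ψ q ^ 2))
    (hqi : 0 < atTop.limsup (fun Q : ℕ =>
      (∑ q ∈ Finset.Icc 1 Q, volume (Atilde ψ y (a q) (b q) q)) ^ 2 /
      ∑ q ∈ Finset.Icc 1 Q, ∑ r ∈ Finset.Icc 1 Q,
        volume (Atilde ψ y (a q) (b q) q ∩ Atilde ψ y (a r) (b r) r))) :
    volume (⋂ N : ℕ, ⋃ q : ℕ, ⋃ _ : N ≤ q, Atilde ψ y (a q) (b q) q) = 1 := by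
  refine volume_limsup_eq_one_of_quasiIndependent (c := ENNReal.ofReal (1 / 36))
    (fun q => measurableSet_Atilde ψ y (a q) (b q) q) (fun q _ hx => hx.1) ?_ (by norm_num)
    (fun n hn => eventually_mul_volume_Atilde_mul_volume_gridBox_le hψ hhalf y hgcdab hn) hqi
  refine tsum_eq_top_of_eventually_ofReal_le hdiv (fun q => sq_nonneg _) ?_
  filter_upwards [eventually_ofReal_le_volume_Atilde_inter_gridBox hψ hhalf y hgcdab one_pos]
    with q hq
  simpa using (hq 0).trans (measure_mono Set.inter_subset_left)

/-- Divergence Borel–Cantelli: if `∑ ψ(q)² = ∞` and the sets `Ã_q` are quasi-independent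
on average, then `limsup Ã_q` has full measure. -/
theorem full_measure_of_quasi_independent
    (δ : ℝ) (hδ : 0 < δ) (ψ : ℕ → ℝ) (hψ : ∀ n, 0 ≤ ψ n)
    (hhalf : ∀ q, ψ q ≤ 1 / 2) (y : Fin 2 → ℝ)
    (a : ℕ → Fin 2 → ℤ) (b : ℕ → ℕ) (hb1 : ∀ q, 1 ≤ b q)
    (hab : ∀ q : ℕ, 1 ≤ q →
      ‖(b q : ℝ) • y - (fun i => (a q i : ℝ))‖ < (q : ℝ) ^ (-(δ / (δ + 3))))
    (hb2 : ∀ q : ℕ, 1 ≤ q → (b q : ℝ) ≤ (q : ℝ) ^ (2 * δ / (δ + 3)))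
    (hgcdab : ∀ q, Nat.gcd (Int.gcd (a q 0) (a q 1)) (b q) = 1)
    (hdiv : ¬ Summable (fun q : ℕ => ψ q ^ 2))
    (hqi : 0 < atTop.limsup (fun Q : ℕ =>
      (∑ q ∈ Finset.Icc 1 Q, volume (Atilde ψ y (a q) (b q) q)) ^ 2 /
      ∑ q ∈ Finset.Icc 1 Q, ∑ r ∈ Finset.Icc 1 Q,
        volume (Atilde ψ y (a q) (b q) q ∩ Atilde ψ y (a r) (b r) r))) :
    volume (⋂ N : ℕ, ⋃ q : ℕ, ⋃ _ : N ≤ q, Atilde ψ y (a q) (b q) q) = 1 :=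
  full_measure_of_quasi_independent_general ψ hψ hhalf y a b hgcdab hdiv hqi
end

section
/- There is an absolute constant C > 0 such that for all ψ : ℕ → ℝ_{≥0}, y ∈ ℝ², and q, r ∈ ℕ with ψ(q) ≤ 1/2 and ψ(r) ≤ 1/2, the Lebesgue measure of A_q ∩ A_r satisfies |A_q ∩ A_r| ≤ C·(ψ(q)²ψ(r)² + ψ(q)²·gcd(q,r)²/q²). -/
/-!
Both `A_q` and `A_r` are products of the one-dimensional sets
`B_q = {x ∈ [0,1) : ‖qx - c‖ < ψ(q)}` (with `c` a coordinate of `y`), so it suffices to prove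
`|B_q ∩ B_r| ≪ ψ(q)ψ(r) + gcd(q,r) ψ(q)/q` and square. A point of `B_q ∩ B_r` lies in
`{x : |qx - p - c| < ψ(q), |rx - p' - c| < ψ(r)}` for a pair of integers `(p, p')`, an interval
of length at most `2 min(ψ(q)/q, ψ(r)/r)`. For a pair that occurs, `n = rp - qp'` is a multiple
of `g = gcd(q,r)` within `rψ(q) + qψ(r)` of `(q - r)c`, which leaves
`O((rψ(q) + qψ(r))/g + 1)` values of `n`; for a fixed `n` the admissible `p` lie in an interval
of length `q + 1` and in one residue class modulo `q/g`, so there are `O(g)` of them.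
-/

open MeasureTheory Real Filter

/-- The set `A_q`. -/
def Aset (ψ : ℕ → ℝ) (y : Fin 2 → ℝ) (q : ℕ) : Set (Fin 2 → ℝ) :=
  {x ∈ unitBox | ∃ p : Fin 2 → ℤ,
    ‖(q : ℝ) • x - (fun i => (p i : ℝ)) - y‖ < ψ q}

open Finset

def Aset₁ (q : ℕ) (c ε : ℝ) : Set ℝ :=
  {x ∈ Set.Ico (0 : ℝ) 1 | ∃ p : ℤ, |q * x - p - c| < ε}

lemma Aset_eq_pi (ψ : ℕ → ℝ) (y : Fin 2 → ℝ) (q : ℕ) :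
    Aset ψ y q = Set.univ.pi fun i => Aset₁ q (y i) (ψ q) := by
  have hnorm (v : Fin 2 → ℝ) : ‖v‖ < ψ q ↔ ∀ i, |v i| < ψ q :=
    ⟨fun h i => (norm_le_pi_norm v i).trans_lt h, fun h =>
      (pi_norm_lt_iff ((abs_nonneg _).trans_lt (h 0))).2 h⟩
  ext x
  simp only [Aset, unitBox, Aset₁, Set.mem_ofPred_eq, Set.mem_pi, Set.mem_univ, true_implies,
    hnorm, Pi.sub_apply, Pi.smul_apply, smul_eq_mul]
  constructor
  · rintro ⟨hbox, p, hp⟩ i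
    exact ⟨hbox i, p i, hp i⟩
  · intro h
    choose hbox p hp using h
    exact ⟨hbox, p, hp⟩

lemma card_le_of_forall_mem_Icc {S : Finset ℤ} {u v : ℝ} (huv : u ≤ v)
    (hS : ∀ k ∈ S, u ≤ k ∧ k ≤ v) : (#S : ℝ) ≤ v - u + 1 := by
  have hsub : S ⊆ Icc ⌈u⌉ ⌊v⌋ := fun k hk =>
    mem_Icc.2 ⟨Int.ceil_le.2 (hS k hk).1, Int.le_floor.2 (hS k hk).2⟩
  have hceil : ⌈u⌉ ≤ ⌊v⌋ + 1 := by
    have : (⌈u⌉ : ℝ) < ⌊v⌋ + 1 + 1 := by linarith [Int.ceil_lt_add_one u, Int.lt_floor_add_one v]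
    exact Int.lt_add_one_iff.1 (by exact_mod_cast this)
  calc (#S : ℝ) ≤ #(Icc ⌈u⌉ ⌊v⌋) := by exact_mod_cast card_le_card hsub
    _ = ((⌊v⌋ + 1 - ⌈u⌉ : ℤ) : ℝ) := by rw [← Int.card_Icc_of_le _ _ hceil]; rfl
    _ ≤ v - u + 1 := by push_cast; linarith [Int.floor_le v, Int.le_ceil u]

lemma card_le_of_forall_mem_Icc_of_modEq {S : Finset ℤ} {m : ℤ} (hm : 0 < m) {u v : ℝ}
    (huv : u ≤ v) (hS : ∀ k ∈ S, u ≤ k ∧ k ≤ v) (hmod : ∀ k ∈ S, ∀ l ∈ S, k ≡ l [ZMOD m]) :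
    (#S : ℝ) ≤ (v - u) / m + 1 := by
  have hm₀ : (0 : ℝ) < m := by exact_mod_cast hm
  rcases S.eq_empty_or_nonempty with rfl | ⟨k₀, hk₀⟩
  · simp only [card_empty, CharP.cast_eq_zero]
    positivity
  have hdvd : ∀ k ∈ S, m ∣ k - k₀ := fun k hk => (hmod k₀ hk₀ k hk).dvd
  have hinj : Set.InjOn (fun k => (k - k₀) / m) S := fun k hk l hl h => by
    have := congrArg (· * m) h
    simp only [Int.ediv_mul_cancel (hdvd k hk), Int.ediv_mul_cancel (hdvd l hl)] at this
    linarith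
  calc (#S : ℝ) = #(S.image fun k => (k - k₀) / m) := by rw [card_image_of_injOn hinj]
    _ ≤ (v - k₀) / m - (u - k₀) / m + 1 := by
        refine card_le_of_forall_mem_Icc (by gcongr) ?_
        simp only [mem_image, forall_exists_index, and_imp, forall_apply_eq_imp_iff₂]
        intro k hk
        rw [Int.cast_div (hdvd k hk) hm₀.ne', Int.cast_sub]
        exact ⟨by gcongr; exact (hS k hk).1, by gcongr; exact (hS k hk).2⟩
    _ = (v - u) / m + 1 := by ring

lemma card_filter_mul_sub_mul_eq_le {S : Finset (ℤ × ℤ)} {q : ℕ} (hq : 0 < q) (r : ℕ) {u v : ℝ}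
    (huv : u ≤ v) (hS : ∀ a ∈ S, u ≤ a.1 ∧ a.1 ≤ v) (n : ℤ) :
    (#(S.filter fun a => r * a.1 - q * a.2 = n) : ℝ) ≤ (v - u) * Nat.gcd q r / q + 1 := by
  set F := S.filter fun a => r * a.1 - q * a.2 = n
  have hq' : (q : ℤ) ≠ 0 := by exact_mod_cast hq.ne'
  have hinj : Set.InjOn Prod.fst (F : Set (ℤ × ℤ)) := fun a ha b hb h => by
    simp only [coe_filter, Set.mem_ofPred_eq, F] at ha hb
    have : (q : ℤ) * a.2 = q * b.2 := by rw [← h] at hb; linarith [ha.2, hb.2]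
    exact Prod.ext h (mul_left_cancel₀ hq' this)
  have hg : (0 : ℝ) < Nat.gcd q r := by exact_mod_cast Nat.gcd_pos_of_pos_left r hq
  have hgcd : (((q : ℤ) / (Nat.gcd q r : ℤ) : ℤ) : ℝ) = q / Nat.gcd q r := by
    rw [Int.cast_div (Int.natCast_dvd_natCast.2 (Nat.gcd_dvd_left q r)) (by exact_mod_cast hg.ne'),
      Int.cast_natCast, Int.cast_natCast]
  calc (#F : ℝ) = #(F.image Prod.fst) := by rw [card_image_of_injOn hinj]
    _ ≤ (v - u) / ((q : ℤ) / (Nat.gcd q r : ℤ) : ℤ) + 1 := by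
        refine card_le_of_forall_mem_Icc_of_modEq ?_ huv ?_ ?_
        · exact Int.ediv_pos_of_pos_of_dvd (by exact_mod_cast hq)
            (by exact_mod_cast (Nat.gcd_pos_of_pos_left r hq).le)
            (Int.natCast_dvd_natCast.2 (Nat.gcd_dvd_left q r))
        · simp only [mem_image, forall_exists_index, and_imp, Prod.forall]
          rintro _ a b ha rfl
          exact hS _ (mem_filter.1 ha).1
        · simp only [mem_image, forall_exists_index, and_imp, Prod.forall, mem_filter, F]
          rintro _ a b - ha rfl _ a' b' - ha' rfl
          rw [← Int.gcd_natCast_natCast]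
          refine Int.ModEq.cancel_left_div_gcd (by exact_mod_cast hq) ?_
          exact Int.modEq_iff_dvd.2 ⟨b' - b, by linarith⟩
    _ = (v - u) * Nat.gcd q r / q + 1 := by rw [hgcd]; field_simp

/-- The pairs `(p, p')` for which `{x ∈ [0,1) : |qx - p - c| < ε, |rx - p' - c| < δ}` can be
nonempty; the last condition is `|r e - q e'| ≤ rε + qδ` for `e = qx - p - c`,
`e' = rx - p' - c`. -/
noncomputable def overlapPairs (q r : ℕ) (c ε δ : ℝ) : Finset (ℤ × ℤ) :=
  (Icc ⌈-c - ε⌉ ⌊q - c + ε⌋ ×ˢ Icc ⌈-c - δ⌉ ⌊r - c + δ⌋).filter fun a =>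
    |((r * a.1 - q * a.2 : ℤ) : ℝ) + (r - q) * c| ≤ r * ε + q * δ

section overlapPairs

variable {q r : ℕ} {c ε δ : ℝ}

lemma mem_overlapPairs {a : ℤ × ℤ} :
    a ∈ overlapPairs q r c ε δ ↔ ((-c - ε ≤ a.1 ∧ a.1 ≤ q - c + ε) ∧
      (-c - δ ≤ a.2 ∧ a.2 ≤ r - c + δ)) ∧
      |((r * a.1 - q * a.2 : ℤ) : ℝ) + (r - q) * c| ≤ r * ε + q * δ := by
  simp only [overlapPairs, mem_filter, mem_product, mem_Icc, Int.ceil_le, Int.le_floor]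

lemma card_overlapPairs_le (hq : 0 < q) (hε : 0 ≤ ε) (hε' : ε ≤ 1 / 2) (hδ : 0 ≤ δ) :
    (#(overlapPairs q r c ε δ) : ℝ) ≤
      3 * Nat.gcd q r * (2 * (r * ε + q * δ) / Nat.gcd q r + 1) := by
  set T := overlapPairs q r c ε δ
  set g := Nat.gcd q r
  set f : ℤ × ℤ → ℤ := fun a => r * a.1 - q * a.2
  have hg : (0 : ℝ) < g := by exact_mod_cast Nat.gcd_pos_of_pos_left r hq
  have hq₀ : (0 : ℝ) < q := by exact_mod_cast hq
  have hfiber : ∀ n ∈ T.image f, #(T.filter fun a => f a = n) ≤ 3 * g := by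
    intro n _
    have h := card_filter_mul_sub_mul_eq_le hq r (by linarith)
      (fun a ha => (mem_overlapPairs.1 ha).1.1) n (S := T)
    have : (q - c + ε - (-c - ε)) * g / q + 1 ≤ 3 * g := by
      have hg₁ : (1 : ℝ) ≤ g := by exact_mod_cast Nat.gcd_pos_of_pos_left r hq
      have hq₁ : (1 : ℝ) ≤ q := by exact_mod_cast hq
      rw [div_add_one hq₀.ne', div_le_iff₀ hq₀]; nlinarith
    exact_mod_cast h.trans this
  have himage : (#(T.image f) : ℝ) ≤ 2 * (r * ε + q * δ) / g + 1 := by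
    have h := card_le_of_forall_mem_Icc_of_modEq (S := T.image f) (m := g)
      (u := -((r - q) * c) - (r * ε + q * δ)) (v := -((r - q) * c) + (r * ε + q * δ))
      (by exact_mod_cast hg) (by nlinarith) ?_ ?_
    · convert h using 2; push_cast; ring
    · simp only [mem_image, forall_exists_index, and_imp]
      rintro _ a ha rfl
      have := abs_le.1 (mem_overlapPairs.1 ha).2
      constructor <;> linarith
    · simp only [mem_image, forall_exists_index, and_imp]
      rintro _ a - rfl _ b - rfl
      have hdvd (a : ℤ × ℤ) : (g : ℤ) ∣ f a := dvd_sub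
        (dvd_mul_of_dvd_left (Int.natCast_dvd_natCast.2 (Nat.gcd_dvd_right q r)) _)
        (dvd_mul_of_dvd_left (Int.natCast_dvd_natCast.2 (Nat.gcd_dvd_left q r)) _)
      exact Int.modEq_iff_dvd.2 (dvd_sub (hdvd b) (hdvd a))
  calc (#T : ℝ) ≤ (3 * g : ℕ) * #(T.image f) := by exact_mod_cast card_le_mul_card_image T _ hfiber
    _ ≤ 3 * g * (2 * (r * ε + q * δ) / g + 1) := by push_cast; gcongr

end overlapPairs

lemma volume_setOf_abs_mul_sub_lt {a : ℝ} (ha : 0 < a) (b ε : ℝ) :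
    volume {x : ℝ | |a * x - b| < ε} = ENNReal.ofReal (2 * ε / a) := by
  have : {x : ℝ | |a * x - b| < ε} = (a * ·) ⁻¹' Metric.ball b ε := by
    ext x; simp [Real.dist_eq]
  rw [this, volume_preimage_mul_left ha.ne', Real.volume_ball, abs_of_pos (inv_pos.2 ha),
    ← ENNReal.ofReal_mul (inv_nonneg.2 ha.le), inv_mul_eq_div]

lemma Aset₁_inter_subset_biUnion (q r : ℕ) (c ε δ : ℝ) :
    Aset₁ q c ε ∩ Aset₁ r c δ ⊆ ⋃ a ∈ overlapPairs q r c ε δ,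
      {x | |q * x - (a.1 + c)| < ε} ∩ {x | |r * x - (a.2 + c)| < δ} := by
  rintro x ⟨⟨⟨hx₀, hx₁⟩, p, hp⟩, -, p', hp'⟩
  have hqx : q * x ≤ q := mul_le_of_le_one_right q.cast_nonneg hx₁.le
  have hrx : r * x ≤ r := mul_le_of_le_one_right r.cast_nonneg hx₁.le
  have hqx₀ : 0 ≤ q * x := by positivity
  have hrx₀ : 0 ≤ r * x := by positivity
  refine Set.mem_biUnion (x := (p, p')) (mem_overlapPairs.2 ⟨?_, ?_⟩) ?_
  · rw [abs_lt] at hp hp'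
    constructor <;> constructor <;> linarith
  · have key : ((r * p - q * p' : ℤ) : ℝ) + (r - q) * c =
        q * (r * x - p' - c) - r * (q * x - p - c) := by push_cast; ring
    rw [key]
    calc _ ≤ |q * (r * x - p' - c)| + |r * (q * x - p - c)| := abs_sub _ _
      _ ≤ q * δ + r * ε := by
          rw [abs_mul, abs_mul, Nat.abs_cast, Nat.abs_cast]
          gcongr
      _ = r * ε + q * δ := add_comm _ _
  · simp only [Set.mem_inter_iff, Set.mem_ofPred_eq, ← sub_sub]
    exact ⟨hp, hp'⟩

lemma volume_Aset₁_inter_le {q r : ℕ} (hq : 0 < q) (hr : 0 < r) (c : ℝ) {ε δ : ℝ} (hε : 0 ≤ ε)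
    (hε' : ε ≤ 1 / 2) (hδ : 0 ≤ δ) :
    volume (Aset₁ q c ε ∩ Aset₁ r c δ) ≤
      ENNReal.ofReal (24 * (ε * δ) + 6 * (Nat.gcd q r * ε / q)) := by
  set T := overlapPairs q r c ε δ
  set L := min (2 * ε / q) (2 * δ / r)
  have hq₀ : (0 : ℝ) < q := by exact_mod_cast hq
  have hr₀ : (0 : ℝ) < r := by exact_mod_cast hr
  have hpiece (a : ℤ × ℤ) :
      volume ({x | |q * x - (a.1 + c)| < ε} ∩ {x | |r * x - (a.2 + c)| < δ}) ≤
        ENNReal.ofReal L := by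
    rw [ENNReal.ofReal_min, ← volume_setOf_abs_mul_sub_lt hq₀, ← volume_setOf_abs_mul_sub_lt hr₀]
    exact le_min (measure_mono Set.inter_subset_left) (measure_mono Set.inter_subset_right)
  have hqL : q * L ≤ 2 * ε := by
    rw [← le_div_iff₀' hq₀]; exact min_le_left _ _
  have hrL : r * L ≤ 2 * δ := by
    rw [← le_div_iff₀' hr₀]; exact min_le_right _ _
  have hcard := card_overlapPairs_le (r := r) (c := c) hq hε hε' hδ
  have hcount : (#T : ℝ) * L ≤ 24 * (ε * δ) + 6 * (Nat.gcd q r * ε / q) := by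
    calc (#T : ℝ) * L ≤ 3 * Nat.gcd q r * (2 * (r * ε + q * δ) / Nat.gcd q r + 1) * L := by
          gcongr
      _ = 6 * ε * (r * L) + 6 * δ * (q * L) + 3 * Nat.gcd q r * L := by field_simp; ring
      _ ≤ 6 * ε * (2 * δ) + 6 * δ * (2 * ε) + 3 * Nat.gcd q r * (2 * ε / q) := by
          gcongr; exact min_le_left _ _
      _ = 24 * (ε * δ) + 6 * (Nat.gcd q r * ε / q) := by ring
  calc volume (Aset₁ q c ε ∩ Aset₁ r c δ)
      ≤ volume (⋃ a ∈ T, {x | |q * x - (a.1 + c)| < ε} ∩ {x | |r * x - (a.2 + c)| < δ}) :=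
        measure_mono (Aset₁_inter_subset_biUnion q r c ε δ)
    _ ≤ ∑ a ∈ T, volume ({x | |q * x - (a.1 + c)| < ε} ∩ {x | |r * x - (a.2 + c)| < δ}) :=
        measure_biUnion_finset_le _ _
    _ ≤ ∑ _a ∈ T, ENNReal.ofReal L := sum_le_sum fun a _ => hpiece a
    _ = ENNReal.ofReal (#T * L) := by
        rw [sum_const, nsmul_eq_mul, ENNReal.ofReal_mul (Nat.cast_nonneg _), ENNReal.ofReal_natCast]
    _ ≤ _ := ENNReal.ofReal_le_ofReal hcount

/-- Overlap estimate: there is an absolute constant `C > 0` such that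
`|A_q ∩ A_r| ≤ C (ψ(q)²ψ(r)² + ψ(q)² gcd(q,r)²/q²)`. -/
theorem overlap_estimate :
    ∃ C : ℝ, 0 < C ∧ ∀ (ψ : ℕ → ℝ), (∀ n, 0 ≤ ψ n) → ∀ (y : Fin 2 → ℝ) (q r : ℕ),
      1 ≤ q → 1 ≤ r → ψ q ≤ 1 / 2 → ψ r ≤ 1 / 2 →
      volume (Aset ψ y q ∩ Aset ψ y r) ≤
        ENNReal.ofReal (C * (ψ q ^ 2 * ψ r ^ 2 +
          ψ q ^ 2 * (Nat.gcd q r : ℝ) ^ 2 / (q : ℝ) ^ 2)) := by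
  refine ⟨720, by norm_num, fun ψ hψ y q r hq hr hψq _ => ?_⟩
  set M := 24 * (ψ q * ψ r) + 6 * (Nat.gcd q r * ψ q / q)
  have hM : 0 ≤ M := by have := hψ q; have := hψ r; positivity
  have hslice (i : Fin 2) :
      volume (Aset₁ q (y i) (ψ q) ∩ Aset₁ r (y i) (ψ r)) ≤ ENNReal.ofReal M :=
    volume_Aset₁_inter_le hq hr (y i) (hψ q) hψq (hψ r)
  have hM₂ : M ^ 2 ≤ 720 * (ψ q ^ 2 * ψ r ^ 2 + ψ q ^ 2 * (Nat.gcd q r : ℝ) ^ 2 / (q : ℝ) ^ 2) := by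
    have : ψ q ^ 2 * ψ r ^ 2 + ψ q ^ 2 * (Nat.gcd q r : ℝ) ^ 2 / (q : ℝ) ^ 2 =
        (ψ q * ψ r) ^ 2 + (Nat.gcd q r * ψ q / q) ^ 2 := by ring
    rw [this]
    nlinarith [sq_nonneg (ψ q * ψ r - Nat.gcd q r * ψ q / q)]
  calc volume (Aset ψ y q ∩ Aset ψ y r)
      = ∏ i, volume (Aset₁ q (y i) (ψ q) ∩ Aset₁ r (y i) (ψ r)) := by
        rw [Aset_eq_pi, Aset_eq_pi, ← Set.pi_inter_distrib, volume_pi_pi]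
    _ ≤ ENNReal.ofReal M ^ 2 := prod_le_pow_card _ _ _ fun i _ => hslice i
    _ = ENNReal.ofReal (M ^ 2) := (ENNReal.ofReal_pow hM 2).symm
    _ ≤ _ := ENNReal.ofReal_le_ofReal hM₂
end

section
/- Let δ > 0, ψ : ℕ → ℝ_{≥0}, y ∈ ℝ², and q > r be natural numbers with ψ(q) ≤ q^{−δ}, ψ(r) ≤ r^{−δ}, and gcd(q, r) > 4·q^{3/(δ+3)}. Let (a_q, b_q) ∈ ℤ² × ℕ satisfy |b_q·y − a_q| < q^{−δ/(δ+3)}, 1 ≤ b_q ≤ q^{2δ/(δ+3)}, and gcd(a_q, b_q) = 1. Then Ã_q ∩ A_r = ∅; in particular the Lebesgue measure of Ã_q ∩ Ã_r is 0. -/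
/-!
If `x ∈ Ã_q ∩ A_r` with `q x ≈ P + y`, `r x ≈ P' + y` and `b y ≈ a`, then the integer vector
`q (b P' + a) - r (b P + a)` is divisible by `gcd(q, r)`, while the exponents are balanced so
that its size is below `3 q^{3/(δ+3)} < gcd(q, r)`. Hence it vanishes, so `q ∣ r (b P + a)`;
as `b P + a` is coprime to `q` this gives `q ∣ r`, impossible for `0 < r < q`.
-/

open MeasureTheory Real Filter

theorem norm_smul_add_sub_smul_add_le {E : Type*} [SeminormedAddCommGroup E] [NormedSpace ℝ E]
    (x y u u' w : E) {q r b : ℝ} (hb : 0 ≤ b) (hr : 0 ≤ r) (hrq : r ≤ q) :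
    ‖q • (b • u' + w) - r • (b • u + w)‖ ≤
      b * (r * ‖q • x - u - y‖ + q * ‖r • x - u' - y‖) + q * ‖b • y - w‖ := by
  have hq : 0 ≤ q := hr.trans hrq
  have hdecomp : q • (b • u' + w) - r • (b • u + w) =
      b • (r • (q • x - u - y) - q • (r • x - u' - y)) - (q - r) • (b • y - w) := by
    module
  rw [hdecomp]
  calc _ ≤ ‖b • (r • (q • x - u - y) - q • (r • x - u' - y))‖ + ‖(q - r) • (b • y - w)‖ :=
        norm_sub_le _ _
    _ ≤ b * (r * ‖q • x - u - y‖ + q * ‖r • x - u' - y‖) + (q - r) * ‖b • y - w‖ := by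
        rw [norm_smul, norm_smul, Real.norm_of_nonneg hb, Real.norm_of_nonneg (sub_nonneg.2 hrq)]
        gcongr
        refine (norm_sub_le _ _).trans_eq ?_
        rw [norm_smul, norm_smul, Real.norm_of_nonneg hr, Real.norm_of_nonneg hq]
    _ ≤ _ := by gcongr; linarith

theorem approx_error_lt {δ q r b εq εr η : ℝ} (hδ : 0 < δ) (hq : 1 ≤ q) (hrq : r ≤ q)
    (hcr : q ^ (3 / (δ + 3)) ≤ r) (hb0 : 0 ≤ b) (hb : b ≤ q ^ (2 * δ / (δ + 3)))
    (hεq : εq ≤ q ^ (-δ)) (hεr : εr ≤ r ^ (-δ)) (hη : η < q ^ (-(δ / (δ + 3)))) :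
    b * (r * εq + q * εr) + q * η < 3 * q ^ (3 / (δ + 3)) := by
  have hq0 : 0 < q := zero_lt_one.trans_le hq
  have hδ3 : 0 < δ + 3 := by linarith
  have hr0 : 0 ≤ r := (Real.rpow_nonneg hq0.le _).trans hcr
  have hq_mul_rpow (z : ℝ) : q * q ^ z = q ^ (1 + z) := by
    rw [Real.rpow_add hq0, Real.rpow_one]
  set e := q ^ (-(3 * δ / (δ + 3))) with he
  have he0 : 0 ≤ e := Real.rpow_nonneg hq0.le _
  have hεq' : εq ≤ e := hεq.trans <| Real.rpow_le_rpow_of_exponent_le hq <| by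
    rw [neg_le_neg_iff, div_le_iff₀ hδ3]; nlinarith
  have hεr' : εr ≤ e := by
    have hec : e = (q ^ (3 / (δ + 3))) ^ (-δ) := by
      rw [he, ← Real.rpow_mul hq0.le]; ring_nf
    rw [hec]
    exact hεr.trans <| Real.rpow_le_rpow_of_nonpos (Real.rpow_pos_of_pos hq0 _) hcr (by linarith)
  have hsum : r * εq + q * εr ≤ 2 * (q * e) := by
    linarith [mul_le_mul_of_nonneg_left hεq' hr0, mul_le_mul_of_nonneg_left hεr' hq0.le,
      mul_le_mul_of_nonneg_right hrq he0]
  have hbe : q ^ (2 * δ / (δ + 3)) * (q * e) = q ^ (3 / (δ + 3)) := by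
    rw [he, hq_mul_rpow, ← Real.rpow_add hq0]
    congr 1; field_simp; ring
  have hqη : q * q ^ (-(δ / (δ + 3))) = q ^ (3 / (δ + 3)) := by
    rw [hq_mul_rpow]
    congr 1; field_simp; ring
  calc b * (r * εq + q * εr) + q * η
      ≤ q ^ (2 * δ / (δ + 3)) * (2 * (q * e)) + q * η := by
        gcongr ?_ + _
        exact (mul_le_mul_of_nonneg_left hsum hb0).trans (by gcongr)
    _ < 2 * q ^ (3 / (δ + 3)) + q ^ (3 / (δ + 3)) := by
        rw [mul_left_comm, hbe, ← hqη]
        gcongr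
    _ = 3 * q ^ (3 / (δ + 3)) := by ring

theorem dvd_of_gcdVec_eq_one {q r : ℕ} {w : Fin 2 → ℤ} (hw : gcdVec q w = 1)
    (h : ∀ i, (q : ℤ) ∣ r * w i) : q ∣ r := by
  have hdvd : q ∣ r * Int.gcd (w 0) (w 1) := by
    simpa only [Int.gcd_mul_left, Int.natAbs_natCast] using Int.dvd_gcd (h 0) (h 1)
  exact Nat.Coprime.dvd_of_dvd_mul_right hw hdvd

theorem mul_eq_mul_of_approx {ι : Type*} [Fintype ι] {δ : ℝ} (hδ : 0 < δ) {x y : ι → ℝ}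
    {a P P' : ι → ℤ} {q r b : ℕ} (hr : 0 < r) (hrq : r ≤ q)
    (hgcd : 3 * (q : ℝ) ^ (3 / (δ + 3)) < Nat.gcd q r)
    (hb : (b : ℝ) ≤ (q : ℝ) ^ (2 * δ / (δ + 3)))
    (hab : ‖(b : ℝ) • y - (fun i => (a i : ℝ))‖ < (q : ℝ) ^ (-(δ / (δ + 3))))
    (hP : ‖(q : ℝ) • x - (fun i => (P i : ℝ)) - y‖ ≤ (q : ℝ) ^ (-δ))
    (hP' : ‖(r : ℝ) • x - (fun i => (P' i : ℝ)) - y‖ ≤ (r : ℝ) ^ (-δ)) (i : ι) :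
    (q : ℤ) * (b * P' i + a i) = r * (b * P i + a i) := by
  have hgr : (Nat.gcd q r : ℝ) ≤ r := by exact_mod_cast Nat.le_of_dvd hr (Nat.gcd_dvd_right q r)
  have hcr : (q : ℝ) ^ (3 / (δ + 3)) ≤ r := by
    linarith [Real.rpow_nonneg (Nat.cast_nonneg q) (3 / (δ + 3))]
  have herror := approx_error_lt hδ (by exact_mod_cast hr.trans_le hrq) (by exact_mod_cast hrq)
    hcr (Nat.cast_nonneg b) hb hP hP' hab
  set V : ι → ℝ := (q : ℝ) • ((b : ℝ) • (fun i => (P' i : ℝ)) + fun i => (a i : ℝ)) -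
    (r : ℝ) • ((b : ℝ) • (fun i => (P i : ℝ)) + fun i => (a i : ℝ)) with hV
  have hVi : V i = ((q * (b * P' i + a i) - r * (b * P i + a i) : ℤ) : ℝ) := by
    simp only [hV, Int.cast_sub, Int.cast_mul, Int.cast_add, Int.cast_natCast, Pi.sub_apply,
      Pi.smul_apply, Pi.add_apply, smul_eq_mul]
  have hVnorm : ‖V‖ < Nat.gcd q r :=
    (norm_smul_add_sub_smul_add_le x y _ _ _ (Nat.cast_nonneg b) (Nat.cast_nonneg r)
      (Nat.cast_le.2 hrq)).trans_lt (herror.trans hgcd)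
  have hVi_lt : |V i| < Nat.gcd q r := (norm_le_pi_norm V i).trans_lt hVnorm
  rw [hVi] at hVi_lt
  rw [← sub_eq_zero]
  refine Int.eq_zero_of_abs_lt_dvd (m := Nat.gcd q r) ?_ (by exact_mod_cast hVi_lt)
  exact dvd_sub (dvd_mul_of_dvd_left (Int.natCast_dvd_natCast.2 (Nat.gcd_dvd_left q r)) _)
    (dvd_mul_of_dvd_left (Int.natCast_dvd_natCast.2 (Nat.gcd_dvd_right q r)) _)

theorem key_lemma_general (δ : ℝ) (hδ : 0 < δ) (ψ : ℕ → ℝ)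
    (y : Fin 2 → ℝ) (q r : ℕ) (hr : 1 ≤ r) (hqr : r < q)
    (hψq : ψ q ≤ (q : ℝ) ^ (-δ)) (hψr : ψ r ≤ (r : ℝ) ^ (-δ))
    (hgcdqr : 4 * (q : ℝ) ^ ((3 : ℝ) / (δ + 3)) < (Nat.gcd q r : ℝ))
    (a : Fin 2 → ℤ) (b : ℕ)
    (hab : ‖(b : ℝ) • y - (fun i => (a i : ℝ))‖ < (q : ℝ) ^ (-(δ / (δ + 3))))
    (hb2 : (b : ℝ) ≤ (q : ℝ) ^ (2 * δ / (δ + 3))) :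
    Atilde ψ y a b q ∩ Aset ψ y r = ∅ ∧
    ∀ (a' : Fin 2 → ℤ) (b' : ℕ),
      volume (Atilde ψ y a b q ∩ Atilde ψ y a' b' r) = 0 := by
  have hgcd : 3 * (q : ℝ) ^ ((3 : ℝ) / (δ + 3)) < Nat.gcd q r := by
    linarith [Real.rpow_nonneg (Nat.cast_nonneg q) ((3 : ℝ) / (δ + 3))]
  have hempty : Atilde ψ y a b q ∩ Aset ψ y r = ∅ := by
    refine Set.eq_empty_of_forall_notMem ?_
    rintro x ⟨⟨-, P, hP, hcop⟩, -, P', hP'⟩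
    have hdvd : q ∣ r := dvd_of_gcdVec_eq_one hcop fun i => ⟨_, (mul_eq_mul_of_approx hδ hr hqr.le
      hgcd hb2 hab (hP.le.trans hψq) (hP'.le.trans hψr) i).symm⟩
    exact hqr.not_ge (Nat.le_of_dvd hr hdvd)
  refine ⟨hempty, fun a' b' => measure_mono_null ?_ (hempty ▸ measure_empty)⟩
  exact Set.inter_subset_inter_right _ fun x ⟨hx, p, hp, _⟩ => ⟨hx, p, hp⟩

/-- Key lemma: if `q > r`, `ψ(q) ≤ q^{-δ}`, `ψ(r) ≤ r^{-δ}` and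
`gcd(q,r) > 4 q^{3/(δ+3)}`, then `Ã_q ∩ A_r = ∅`; in particular `|Ã_q ∩ Ã_r| = 0`. -/
theorem key_lemma (δ : ℝ) (hδ : 0 < δ) (ψ : ℕ → ℝ) (hψ : ∀ n, 0 ≤ ψ n)
    (y : Fin 2 → ℝ) (q r : ℕ) (hr : 1 ≤ r) (hqr : r < q)
    (hψq : ψ q ≤ (q : ℝ) ^ (-δ)) (hψr : ψ r ≤ (r : ℝ) ^ (-δ))
    (hgcdqr : 4 * (q : ℝ) ^ ((3 : ℝ) / (δ + 3)) < (Nat.gcd q r : ℝ))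
    (a : Fin 2 → ℤ) (b : ℕ) (hb1 : 1 ≤ b)
    (hab : ‖(b : ℝ) • y - (fun i => (a i : ℝ))‖ < (q : ℝ) ^ (-(δ / (δ + 3))))
    (hb2 : (b : ℝ) ≤ (q : ℝ) ^ (2 * δ / (δ + 3)))
    (hgcdab : Nat.gcd (Int.gcd (a 0) (a 1)) b = 1) :
    Atilde ψ y a b q ∩ Aset ψ y r = ∅ ∧
    ∀ (a' : Fin 2 → ℤ) (b' : ℕ),
      volume (Atilde ψ y a b q ∩ Atilde ψ y a' b' r) = 0 :=
  key_lemma_general δ hδ ψ y q r hr hqr hψq hψr hgcdqr a b hab hb2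
end

section
/- Let δ > 0. For every q ∈ ℕ, ∑_{1 ≤ r ≤ q, gcd(q,r) ≤ 4q^{3/(δ+3)}} gcd(q, r)²/q² < 4·τ(q)/q^{δ/(δ+3)}, where τ(q) denotes the number of positive divisors of q. -/
/-!
Since every term has `gcd(q,r) ≤ M := 4 q^{3/(δ+3)}`, we have `gcd(q,r)² ≤ M gcd(q,r)`,
strictly for `r = 1`. Grouping `r` by `d = gcd(q,r)`, at most `q/d` values of `r` give `d`,
so `∑_{r ≤ q} gcd(q,r) ≤ τ(q) q`. Hence the sum is below
`M τ(q) q / q² = 4 τ(q) / q^{δ/(δ+3)}`.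
-/

open Real

open Finset

theorem Nat.sum_Icc_gcd_le_card_divisors_mul (q : ℕ) :
    ∑ r ∈ Icc 1 q, q.gcd r ≤ #q.divisors * q := by
  have hfib :
      ∑ r ∈ Icc 1 q, q.gcd r = ∑ d ∈ q.divisors, ∑ r ∈ Icc 1 q with q.gcd r = d, d := by
    rw [← sum_fiberwise_of_maps_to (g := q.gcd) fun r hr =>
      Nat.mem_divisors.2 ⟨q.gcd_dvd_left r, by grind⟩]
    exact sum_congr rfl fun d _ => sum_congr rfl fun r hr => (mem_filter.1 hr).2
  rw [hfib, card_eq_sum_ones, sum_mul, one_mul]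
  refine sum_le_sum fun d _ => ?_
  calc ∑ r ∈ Icc 1 q with q.gcd r = d, d
      = #{r ∈ Icc 1 q | q.gcd r = d} * d := by rw [sum_const, smul_eq_mul]
    _ ≤ #{r ∈ Ioc 0 q | d ∣ r} * d := by
        gcongr
        intro r
        simp only [mem_filter, mem_Icc, mem_Ioc]
        rintro ⟨hr, rfl⟩
        exact ⟨by omega, q.gcd_dvd_right r⟩
    _ = q / d * d := by rw [Nat.Ioc_filter_dvd_card_eq_div]
    _ ≤ q := Nat.div_mul_le_self q d

theorem Finset.sum_sq_filter_le_lt_mul_sum {ι : Type*} {s : Finset ι} {f : ι → ℝ}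
    {M : ℝ} (hf : ∀ i ∈ s, 0 ≤ f i) {i₀ : ι} (hi₀ : i₀ ∈ s) (hpos : 0 < f i₀)
    (hlt : f i₀ < M) :
    ∑ i ∈ s with f i ≤ M, f i ^ 2 < M * ∑ i ∈ s, f i :=
  calc ∑ i ∈ s with f i ≤ M, f i ^ 2
      < ∑ i ∈ s with f i ≤ M, M * f i := by
        refine sum_lt_sum (fun i hi => ?_) ⟨i₀, mem_filter.2 ⟨hi₀, hlt.le⟩, ?_⟩
        · rw [mem_filter] at hi
          nlinarith [hf i hi.1]
        · nlinarith
    _ ≤ M * ∑ i ∈ s, f i := by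
        rw [← mul_sum]
        refine mul_le_mul_of_nonneg_left (sum_le_sum_of_subset_of_nonneg (filter_subset _ _)
          fun i hi _ => hf i hi) (hpos.trans hlt).le

/-- For `δ > 0` and `q ≥ 1`, the sum of `gcd(q,r)²/q²` over `1 ≤ r ≤ q` with
`gcd(q,r) ≤ 4 q^{3/(δ+3)}` is less than `4 τ(q) / q^{δ/(δ+3)}`. -/
theorem restricted_gcd_sum_lt (δ : ℝ) (hδ : 0 < δ) (q : ℕ) (hq : 1 ≤ q) :
    ∑ r ∈ (Finset.Icc 1 q).filter
        (fun r => (Nat.gcd q r : ℝ) ≤ 4 * (q : ℝ) ^ ((3 : ℝ) / (δ + 3))),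
      (Nat.gcd q r : ℝ) ^ 2 / (q : ℝ) ^ 2 <
      4 * (q.divisors.card : ℝ) / (q : ℝ) ^ (δ / (δ + 3)) := by
  have hq₀ : (0 : ℝ) < q := by exact_mod_cast hq
  have hMt : 4 * (q : ℝ) ^ ((3 : ℝ) / (δ + 3)) * (q : ℝ) ^ (δ / (δ + 3)) = 4 * q := by
    rw [mul_assoc, ← rpow_add hq₀, ← add_div, add_comm, div_self (by linarith), rpow_one]
  have hM : 1 < 4 * (q : ℝ) ^ ((3 : ℝ) / (δ + 3)) := by
    have := one_le_rpow (by exact_mod_cast hq : (1 : ℝ) ≤ q)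
      (by positivity : 0 ≤ 3 / (δ + 3))
    linarith
  have hgcd : (∑ r ∈ Icc 1 q, (q.gcd r : ℝ)) ≤ q.divisors.card * q := by
    exact_mod_cast q.sum_Icc_gcd_le_card_divisors_mul
  set M := 4 * (q : ℝ) ^ ((3 : ℝ) / (δ + 3))
  set t := (q : ℝ) ^ (δ / (δ + 3))
  rw [← sum_div, div_lt_div_iff₀ (by positivity) (by positivity)]
  calc (∑ r ∈ Icc 1 q with (q.gcd r : ℝ) ≤ M, (q.gcd r : ℝ) ^ 2) * t
      < M * (∑ r ∈ Icc 1 q, (q.gcd r : ℝ)) * t := by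
        gcongr
        exact sum_sq_filter_le_lt_mul_sum (fun _ _ => Nat.cast_nonneg _)
          (mem_Icc.2 ⟨le_rfl, hq⟩) (by simp) (by simpa using hM)
    _ ≤ M * (q.divisors.card * q) * t := by gcongr
    _ = 4 * q.divisors.card * (q : ℝ) ^ 2 := by
        linear_combination (q.divisors.card : ℝ) * q * hMt
end

section
/- Let δ > 0. There is a constant C = C(δ) > 0 such that for every q ∈ ℕ, ∑_{1 ≤ r ≤ q, gcd(q,r) ≤ 4q^{3/(δ+3)}} gcd(q, r)²/q² ≤ C, i.e. the sum over r ≤ q restricted to gcd(q, r) ≤ 4q^{3/(δ+3)} of gcd(q,r)²/q² is bounded uniformly in q. -/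
/-!
Group the terms by `d = gcd(q, r)`. Each divisor `d ≤ T` of `q` is the gcd of at most `q / d`
of the `r ≤ q`, so it contributes at most `d / q ≤ T / q`; hence the sum is at most
`τ(q) T / q`. With `T = 4 q^{3/(δ+3)}` the divisor bound `τ(q) ≤ K q^{δ/(δ+3)}` makes this
`≤ 4K`.

For the divisor bound write `τ(n) = ∏ (a_p + 1)`: once `p^ε ≥ 2` we have
`a + 1 ≤ 2^a ≤ p^{εa}`, and each of the finitely many primes with `p^ε < 2` costs at most the
factor `1 + 1/(ε log 2)`, since `a + 1 ≤ (1 + 1/log y) y^a` for every `y > 1`.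
-/

open Real Finset

lemma add_one_le_mul_pow {y : ℝ} (hy : 1 < y) (a : ℕ) :
    (a + 1 : ℝ) ≤ (1 + (log y)⁻¹) * y ^ a := by
  have hlog : 0 < log y := log_pos hy
  have hexp : 1 + a * log y ≤ y ^ a := by
    rw [← rpow_natCast, rpow_def_of_pos (by linarith)]
    linarith [add_one_le_exp (log y * a), mul_comm (a : ℝ) (log y)]
  calc (a + 1 : ℝ) ≤ (1 + (log y)⁻¹) * (1 + a * log y) := by
        have hexpand :
            (1 + (log y)⁻¹) * (1 + a * log y) = a + 1 + (a * log y + (log y)⁻¹) := by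
          field_simp
          ring
        rw [hexpand]
        linarith [mul_nonneg (Nat.cast_nonneg a) hlog.le, inv_pos.2 hlog]
    _ ≤ (1 + (log y)⁻¹) * y ^ a := by gcongr

lemma add_one_le_pow_of_two_le {y : ℝ} (hy : 2 ≤ y) (a : ℕ) : (a + 1 : ℝ) ≤ y ^ a :=
  calc (a + 1 : ℝ) ≤ 2 ^ a := by exact_mod_cast Nat.lt_two_pow_self
    _ ≤ y ^ a := pow_le_pow_left₀ zero_le_two hy a

lemma add_one_le_mul_rpow_pow {x ε : ℝ} (hx : 2 ≤ x) (hε : 0 < ε) (a : ℕ) :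
    (a + 1 : ℝ) ≤ (1 + (ε * log 2)⁻¹) * (x ^ ε) ^ a := by
  have hlog : ε * log 2 ≤ log (x ^ ε) := by
    rw [log_rpow (by linarith)]
    exact mul_le_mul_of_nonneg_left (log_le_log two_pos hx) hε.le
  calc (a + 1 : ℝ) ≤ (1 + (log (x ^ ε))⁻¹) * (x ^ ε) ^ a :=
        add_one_le_mul_pow (one_lt_rpow (by linarith) hε) a
    _ ≤ (1 + (ε * log 2)⁻¹) * (x ^ ε) ^ a := by gcongr

lemma prod_primeFactors_rpow_pow_factorization {n : ℕ} (hn : n ≠ 0) (ε : ℝ) :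
    ∏ p ∈ n.primeFactors, ((p : ℝ) ^ ε) ^ n.factorization p = (n : ℝ) ^ ε := by
  rw [prod_congr rfl fun p _ => rpow_pow_comm (Nat.cast_nonneg p) ε _,
    finsetProd_rpow _ _ fun p _ => by positivity]
  exact_mod_cast congrArg (fun m : ℕ => (m : ℝ) ^ ε) (Nat.prod_factorization_pow_eq_self hn)

lemma card_filter_rpow_lt_two_le (n : ℕ) {ε : ℝ} (hε : 0 < ε) :
    #{p ∈ n.primeFactors | ((p : ℕ) : ℝ) ^ ε < 2} ≤ ⌈(2 : ℝ) ^ ε⁻¹⌉₊ := by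
  refine (card_le_card fun p hp => ?_).trans (card_range _).le
  rw [mem_filter] at hp
  rw [mem_range, Nat.lt_ceil, lt_rpow_inv_iff_of_pos (Nat.cast_nonneg _) zero_le_two hε]
  exact hp.2

theorem exists_card_divisors_le_mul_rpow {ε : ℝ} (hε : 0 < ε) :
    ∃ K : ℝ, 0 < K ∧ ∀ n : ℕ, (#n.divisors : ℝ) ≤ K * (n : ℝ) ^ ε := by
  set K : ℝ := 1 + (ε * log 2)⁻¹
  have hK : 1 ≤ K := le_add_of_nonneg_right (by positivity)
  refine ⟨K ^ ⌈(2 : ℝ) ^ ε⁻¹⌉₊, by positivity, fun n => ?_⟩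
  rcases eq_or_ne n 0 with rfl | hn
  · simp [zero_rpow hε.ne']
  have hfactor : ∀ p ∈ n.primeFactors, ((n.factorization p + 1 : ℕ) : ℝ) ≤
      (if (p : ℝ) ^ ε < 2 then K else 1) * ((p : ℝ) ^ ε) ^ n.factorization p := by
    intro p hp
    have hp2 : (2 : ℝ) ≤ p := by exact_mod_cast (Nat.prime_of_mem_primeFactors hp).two_le
    push_cast
    split_ifs with hsmall
    · exact add_one_le_mul_rpow_pow hp2 hε _
    · rw [one_mul]
      exact add_one_le_pow_of_two_le (not_lt.1 hsmall) _
  calc (#n.divisors : ℝ) = ∏ p ∈ n.primeFactors, ((n.factorization p + 1 : ℕ) : ℝ) := by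
        rw [Nat.card_divisors hn, Nat.cast_prod]
    _ ≤ ∏ p ∈ n.primeFactors,
          (if (p : ℝ) ^ ε < 2 then K else 1) * ((p : ℝ) ^ ε) ^ n.factorization p :=
        prod_le_prod (fun _ _ => by positivity) hfactor
    _ = K ^ #{p ∈ n.primeFactors | ((p : ℕ) : ℝ) ^ ε < 2} * (n : ℝ) ^ ε := by
        rw [prod_mul_distrib, prod_ite, prod_const, prod_const_one, mul_one,
          prod_primeFactors_rpow_pow_factorization hn]
    _ ≤ K ^ ⌈(2 : ℝ) ^ ε⁻¹⌉₊ * (n : ℝ) ^ ε := by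
        gcongr
        exact card_filter_rpow_lt_two_le n hε

lemma card_filter_gcd_eq_le (q d : ℕ) : #{r ∈ Icc 1 q | q.gcd r = d} ≤ q / d := by
  rw [← Nat.Ioc_filter_dvd_card_eq_div]
  refine card_le_card fun r hr => ?_
  simp only [mem_filter, mem_Icc, mem_Ioc] at hr ⊢
  exact ⟨⟨hr.1.1, hr.1.2⟩, hr.2 ▸ Nat.gcd_dvd_right q r⟩

lemma sum_sq_gcd_div_sq_le (q : ℕ) {T : ℝ} (hT : 0 ≤ T) :
    ∑ r ∈ (Icc 1 q).filter (fun r => (q.gcd r : ℝ) ≤ T), (q.gcd r : ℝ) ^ 2 / (q : ℝ) ^ 2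
      ≤ #q.divisors * T / q := by
  set s := (Icc 1 q).filter (fun r => (q.gcd r : ℝ) ≤ T)
  rw [sum_comp (fun d : ℕ => (d : ℝ) ^ 2 / (q : ℝ) ^ 2) q.gcd, mul_div_assoc]
  have himage : s.image q.gcd ⊆ q.divisors := by
    intro d hd
    simp only [s, mem_image, mem_filter, mem_Icc] at hd
    obtain ⟨r, ⟨⟨hr1, hrq⟩, _⟩, rfl⟩ := hd
    exact Nat.mem_divisors.2 ⟨Nat.gcd_dvd_left q r, by omega⟩
  have hterm : ∀ d ∈ s.image q.gcd,
      #{r ∈ s | q.gcd r = d} • ((d : ℝ) ^ 2 / (q : ℝ) ^ 2) ≤ T / q := by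
    intro d hd
    simp only [s, mem_image, mem_filter, mem_Icc] at hd
    obtain ⟨r, ⟨_, hdT⟩, rfl⟩ := hd
    have hfiber : #{x ∈ s | q.gcd x = q.gcd r} ≤ q / q.gcd r :=
      (card_le_card (filter_subset_filter _ (filter_subset _ _))).trans
        (card_filter_gcd_eq_le q _)
    calc #{x ∈ s | q.gcd x = q.gcd r} • ((q.gcd r : ℝ) ^ 2 / (q : ℝ) ^ 2)
        ≤ ((q / q.gcd r : ℕ) : ℝ) * ((q.gcd r : ℝ) ^ 2 / (q : ℝ) ^ 2) := by
          rw [nsmul_eq_mul]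
          gcongr
      _ ≤ (q / q.gcd r : ℝ) * ((q.gcd r : ℝ) ^ 2 / (q : ℝ) ^ 2) := by
          gcongr
          exact Nat.cast_div_le
      _ = q.gcd r / q := by field_simp
      _ ≤ T / q := by gcongr
  calc _ ≤ ∑ d ∈ s.image q.gcd, T / q := sum_le_sum hterm
    _ = #(s.image q.gcd) * (T / q) := by rw [sum_const, nsmul_eq_mul]
    _ ≤ #q.divisors * (T / q) := by gcongr

/-- For each `δ > 0` there is a constant `C = C(δ) > 0` bounding, uniformly in `q`, the sum
of `gcd(q,r)²/q²` over `1 ≤ r ≤ q` with `gcd(q,r) ≤ 4 q^{3/(δ+3)}`. -/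
theorem restricted_gcd_sum_bounded (δ : ℝ) (hδ : 0 < δ) :
    ∃ C : ℝ, 0 < C ∧ ∀ q : ℕ,
      ∑ r ∈ (Finset.Icc 1 q).filter
          (fun r => (Nat.gcd q r : ℝ) ≤ 4 * (q : ℝ) ^ ((3 : ℝ) / (δ + 3))),
        (Nat.gcd q r : ℝ) ^ 2 / (q : ℝ) ^ 2 ≤ C := by
  obtain ⟨K, hK, hτ⟩ := exists_card_divisors_le_mul_rpow (ε := δ / (δ + 3)) (by positivity)
  refine ⟨4 * K, by positivity, fun q => ?_⟩
  have hexp : δ / (δ + 3) + 3 / (δ + 3) = 1 := by field_simp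
  calc _ ≤ #q.divisors * (4 * (q : ℝ) ^ ((3 : ℝ) / (δ + 3))) / q :=
        sum_sq_gcd_div_sq_le q (by positivity)
    _ ≤ K * (q : ℝ) ^ (δ / (δ + 3)) * (4 * (q : ℝ) ^ ((3 : ℝ) / (δ + 3))) / q := by
        gcongr
        exact hτ q
    _ = 4 * K * ((q : ℝ) ^ (δ / (δ + 3) + 3 / (δ + 3)) / q) := by
        rw [rpow_add' (Nat.cast_nonneg q) (hexp ▸ one_ne_zero)]
        ring
    _ = 4 * K * (q / q) := by rw [hexp, rpow_one]
    _ ≤ 4 * K := mul_le_of_le_one_right (by positivity) (div_self_le_one _)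
end

section
/- Let δ > 0, q > r be natural numbers with gcd(q, r) > 2·q^{3/(δ+3)}, y ∈ ℝ², and (a_q, b_q) ∈ ℤ² × ℕ with |b_q·y − a_q| < q^{−δ/(δ+3)} and 1 ≤ b_q ≤ q^{2δ/(δ+3)}. Then for all p, s ∈ ℤ² with gcd(q, b_q·p + a_q) = 1, the distance between the box centers satisfies |(p + y)/q − (s + y)/r| > gcd(q, r)/(2·b_q·q·r), where |·| denotes the maximum norm on ℝ², gcd(q, v) for v = (v₁, v₂) ∈ ℤ² means gcd(q, v₁, v₂), and vector operations are componentwise. -/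
open Real

/-!
Write `w = b p + a`, `u = b s + a` and `e = b y - a`. Then
`(p + y)/q - (s + y)/r = (w r - u q + e (r - q)) / (b q r)` coordinatewise.
The integer vector `w r - u q` is nonzero (otherwise `q ∣ r`, as `q` is coprime to `w`) and
divisible by `gcd(q, r)`, so one coordinate has size at least `gcd(q, r)`; the error term
`e (r - q)` is smaller than `q^{-δ/(δ+3)} q = q^{3/(δ+3)} < gcd(q, r)/2`.
-/

lemma Int.dvd_of_coprime_gcd_of_dvd_mul {q : ℕ} {m n r : ℤ} (h : Nat.Coprime q (Int.gcd m n))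
    (hm : (q : ℤ) ∣ m * r) (hn : (q : ℤ) ∣ n * r) : (q : ℤ) ∣ r := by
  have hqgcd : (q : ℤ) ∣ (Int.gcd (m * r) (n * r) : ℤ) := Int.dvd_coe_gcd hm hn
  rw [Int.gcd_mul_right, Int.natCast_dvd_natCast] at hqgcd
  exact Int.natCast_dvd.2 (h.dvd_of_dvd_mul_left hqgcd)

lemma exists_gcd_le_abs_mul_sub_mul {q r : ℕ} (hqr : ¬ q ∣ r) {w : Fin 2 → ℤ}
    (hw : gcdVec q w = 1) (u : Fin 2 → ℤ) :
    ∃ i, (Nat.gcd q r : ℤ) ≤ |w i * r - u i * q| := by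
  obtain ⟨i, hi⟩ : ∃ i, w i * r - u i * q ≠ 0 := by
    by_contra! h
    exact hqr <| Int.natCast_dvd_natCast.1 <|
      Int.dvd_of_coprime_gcd_of_dvd_mul hw ⟨u 0, by linarith [h 0]⟩ ⟨u 1, by linarith [h 1]⟩
  have hg : (Nat.gcd q r : ℤ) ∣ w i * r - u i * q :=
    dvd_sub (dvd_mul_of_dvd_right (Int.natCast_dvd_natCast.2 (Nat.gcd_dvd_right q r)) _)
      (dvd_mul_of_dvd_right (Int.natCast_dvd_natCast.2 (Nat.gcd_dvd_left q r)) _)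
  exact ⟨i, Int.le_of_dvd (abs_pos.2 hi) ((dvd_abs _ _).2 hg)⟩

lemma center_sub_center_eq {b q r : ℝ} (hb : b ≠ 0) (hq : q ≠ 0) (hr : r ≠ 0) (p s y a : ℝ) :
    (p + y) / q - (s + y) / r
      = ((b * p + a) * r - (b * s + a) * q + (b * y - a) * (r - q)) / (b * q * r) := by
  field_simp
  ring

lemma div_lt_abs_center_sub_center {b q r g : ℝ} (hb : 0 < b) (hr : 0 < r) (hqr : r < q)
    {p s y a : ℝ} (hg : g ≤ |(b * p + a) * r - (b * s + a) * q|)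
    (he : 2 * (|b * y - a| * (q - r)) < g) :
    g / (2 * b * q * r) < |(p + y) / q - (s + y) / r| := by
  have hbqr : 0 < b * q * r := by have := hr.trans hqr; positivity
  have herr : |(b * y - a) * (r - q)| = |b * y - a| * (q - r) := by
    rw [abs_mul, abs_sub_comm r, abs_of_pos (sub_pos.2 hqr)]
  have hnum : g / 2 < |(b * p + a) * r - (b * s + a) * q + (b * y - a) * (r - q)| := by
    have := abs_sub_abs_le_abs_add ((b * p + a) * r - (b * s + a) * q) ((b * y - a) * (r - q))
    linarith
  rw [center_sub_center_eq hb.ne' (hr.trans hqr).ne' hr.ne', abs_div, abs_of_pos hbqr,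
    mul_assoc 2, mul_assoc 2, ← div_div]
  exact div_lt_div_of_pos_right hnum hbqr

lemma rpow_neg_div_add_mul_self {q δ : ℝ} (hq : 0 < q) (hδ : δ + 3 ≠ 0) :
    q ^ (-(δ / (δ + 3))) * q = q ^ (3 / (δ + 3)) := by
  rw [← rpow_add_one hq.ne']
  congr 1
  field_simp
  ring

theorem center_separation_general (δ : ℝ) (hδ : 0 < δ) (q r : ℕ) (hr : 1 ≤ r) (hqr : r < q)
    (hgcdqr : 2 * (q : ℝ) ^ ((3 : ℝ) / (δ + 3)) < (Nat.gcd q r : ℝ))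
    (y : Fin 2 → ℝ) (a : Fin 2 → ℤ) (b : ℕ) (hb1 : 1 ≤ b)
    (hab : ‖(b : ℝ) • y - (fun i => (a i : ℝ))‖ < (q : ℝ) ^ (-(δ / (δ + 3)))) :
    ∀ p s : Fin 2 → ℤ, gcdVec q (fun i => (b : ℤ) * p i + a i) = 1 →
      (Nat.gcd q r : ℝ) / (2 * (b : ℝ) * q * r) <
        ‖(fun i => ((p i : ℝ) + y i) / (q : ℝ)) -
          (fun i => ((s i : ℝ) + y i) / (r : ℝ))‖ := by
  intro p s hgcd
  have hrR : (0 : ℝ) < r := by exact_mod_cast hr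
  have hqrR : (r : ℝ) < q := by exact_mod_cast hqr
  obtain ⟨i, hi⟩ := exists_gcd_le_abs_mul_sub_mul (w := fun i => (b : ℤ) * p i + a i)
    (Nat.not_dvd_of_pos_of_lt hr hqr) hgcd (fun i => (b : ℤ) * s i + a i)
  have herr : 2 * (|(b : ℝ) * y i - a i| * (q - r)) < Nat.gcd q r := by
    have hyi : |(b : ℝ) * y i - a i| < (q : ℝ) ^ (-(δ / (δ + 3))) :=
      (norm_le_pi_norm ((b : ℝ) • y - (fun i => (a i : ℝ))) i).trans_lt hab
    calc 2 * (|(b : ℝ) * y i - a i| * (q - r))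
        ≤ 2 * ((q : ℝ) ^ (-(δ / (δ + 3))) * q) := by gcongr; linarith
      _ = 2 * (q : ℝ) ^ ((3 : ℝ) / (δ + 3)) := by
        rw [rpow_neg_div_add_mul_self (hrR.trans hqrR) (by linarith)]
      _ < Nat.gcd q r := hgcdqr
  calc (Nat.gcd q r : ℝ) / (2 * (b : ℝ) * q * r)
      < |((p i : ℝ) + y i) / q - ((s i : ℝ) + y i) / r| :=
        div_lt_abs_center_sub_center (by exact_mod_cast hb1) hrR hqrR
          (by exact_mod_cast hi) herr
    _ ≤ _ := norm_le_pi_norm ((fun i => ((p i : ℝ) + y i) / (q : ℝ)) -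
          (fun i => ((s i : ℝ) + y i) / (r : ℝ))) i

/-- Key separation estimate for the box centers: under the Dirichlet conditions on
`(a_q, b_q)` and `gcd(q,r) > 2 q^{3/(δ+3)}`, for all `p, s ∈ ℤ²` with
`gcd(q, b_q·p + a_q) = 1` one has `|(p+y)/q − (s+y)/r| > gcd(q,r)/(2 b_q q r)`. -/
theorem center_separation (δ : ℝ) (hδ : 0 < δ) (q r : ℕ) (hr : 1 ≤ r) (hqr : r < q)
    (hgcdqr : 2 * (q : ℝ) ^ ((3 : ℝ) / (δ + 3)) < (Nat.gcd q r : ℝ))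
    (y : Fin 2 → ℝ) (a : Fin 2 → ℤ) (b : ℕ) (hb1 : 1 ≤ b)
    (hab : ‖(b : ℝ) • y - (fun i => (a i : ℝ))‖ < (q : ℝ) ^ (-(δ / (δ + 3))))
    (hb2 : (b : ℝ) ≤ (q : ℝ) ^ (2 * δ / (δ + 3))) :
    ∀ p s : Fin 2 → ℤ, gcdVec q (fun i => (b : ℤ) * p i + a i) = 1 →
      (Nat.gcd q r : ℝ) / (2 * (b : ℝ) * q * r) <
        ‖(fun i => ((p i : ℝ) + y i) / (q : ℝ)) -
          (fun i => ((s i : ℝ) + y i) / (r : ℝ))‖ :=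
  center_separation_general δ hδ q r hr hqr hgcdqr y a b hb1 hab
end

section
/- Let δ > 0 and let q > r be natural numbers with gcd(q, r) > 4·q^{3/(δ+3)}. Let ψ : ℕ → ℝ_{≥0} with ψ(q) ≤ q^{−δ} and ψ(r) ≤ r^{−δ}, and let b_q ∈ ℕ with 1 ≤ b_q ≤ q^{2δ/(δ+3)}. Then ψ(q)/q + ψ(r)/r < gcd(q, r)/(2·b_q·q·r). -/
open Real

/-- The half-width inequality: if `q > r ≥ 1`, `gcd(q,r) > 4 q^{3/(δ+3)}`,
`ψ(q) ≤ q^{-δ}`, `ψ(r) ≤ r^{-δ}` and `1 ≤ b ≤ q^{2δ/(δ+3)}`, then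
`ψ(q)/q + ψ(r)/r < gcd(q,r)/(2·b·q·r)`. -/
theorem halfwidth_lt_separation (δ : ℝ) (hδ : 0 < δ) (q r : ℕ) (hr : 1 ≤ r) (hqr : r < q)
    (hgcdqr : 4 * (q : ℝ) ^ ((3 : ℝ) / (δ + 3)) < (Nat.gcd q r : ℝ))
    (ψ : ℕ → ℝ) (hψ : ∀ n, 0 ≤ ψ n)
    (hψq : ψ q ≤ (q : ℝ) ^ (-δ)) (hψr : ψ r ≤ (r : ℝ) ^ (-δ))
    (b : ℕ) (hb1 : 1 ≤ b) (hb2 : (b : ℝ) ≤ (q : ℝ) ^ (2 * δ / (δ + 3))) :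
    ψ q / (q : ℝ) + ψ r / (r : ℝ) < (Nat.gcd q r : ℝ) / (2 * (b : ℝ) * q * r) := by
  have hs : (0:ℝ) < δ + 3 := by linarith
  have hx : (0:ℝ) < q := by exact_mod_cast (by omega : 0 < q)
  have hy : (0:ℝ) < r := by exact_mod_cast hr
  have hyx : (r:ℝ) ≤ q := by exact_mod_cast hqr.le
  have hB : (1:ℝ) ≤ b := by exact_mod_cast hb1
  have he : (0:ℝ) < (q:ℝ) ^ ((3:ℝ)/(δ+3)) := rpow_pos_of_pos hx _
  have hgr : (Nat.gcd q r : ℝ) ≤ r := by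
    exact_mod_cast Nat.le_of_dvd (by omega) (Nat.gcd_dvd_right q r)
  have hrbig : (q:ℝ) ^ ((3:ℝ)/(δ+3)) ≤ r := by nlinarith
  -- y^(-δ) ≤ (x^(3/(δ+3)))^(-δ)
  have hkey : (r:ℝ) ^ (-δ) ≤ ((q:ℝ) ^ ((3:ℝ)/(δ+3))) ^ (-δ) := by
    rw [rpow_neg hy.le, rpow_neg he.le]
    exact inv_anti₀ (rpow_pos_of_pos he _) (rpow_le_rpow he.le hrbig hδ.le)
  -- monotonicity: x^(-δ)/x ≤ y^(-δ)/y
  have hmono : (q:ℝ) ^ (-δ) / q ≤ (r:ℝ) ^ (-δ) / r := by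
    have h1 : (q:ℝ)^(-δ)/q = (q:ℝ)^(-(δ+1)) := by
      rw [show -(δ+1) = -δ + (-1) by ring, rpow_add hx, rpow_neg_one, div_eq_mul_inv]
    have h2 : (r:ℝ)^(-δ)/r = (r:ℝ)^(-(δ+1)) := by
      rw [show -(δ+1) = -δ + (-1) by ring, rpow_add hy, rpow_neg_one, div_eq_mul_inv]
    rw [h1, h2, rpow_neg hx.le, rpow_neg hy.le]
    exact inv_anti₀ (rpow_pos_of_pos hy _) (rpow_le_rpow hy.le hyx (by linarith))
  -- main bound: b * (x * y^(-δ)) ≤ x^(3/(δ+3))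
  have hmain : (b:ℝ) * ((q:ℝ) * (r:ℝ)^(-δ)) ≤ (q:ℝ) ^ ((3:ℝ)/(δ+3)) := by
    have h0 : (0:ℝ) ≤ (r:ℝ)^(-δ) := (rpow_pos_of_pos hy _).le
    have hprod : (b:ℝ) * ((q:ℝ) * (r:ℝ)^(-δ))
        ≤ (q:ℝ)^(2*δ/(δ+3)) * ((q:ℝ) * ((q:ℝ) ^ ((3:ℝ)/(δ+3))) ^ (-δ)) := by
      gcongr
    refine hprod.trans_eq ?_
    rw [← rpow_mul hx.le]
    nth_rewrite 2 [← rpow_one (q:ℝ)]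
    rw [← rpow_add hx, ← rpow_add hx]
    congr 1
    field_simp
    ring
  have hpos : (0:ℝ) < 2 * (b:ℝ) * q * r := by positivity
  have h2 : 2 * ((r:ℝ)^(-δ)/r) < (Nat.gcd q r : ℝ) / (2*(b:ℝ)*q*r) := by
    rw [mul_div_assoc', div_lt_div_iff₀ hy hpos]
    nlinarith [mul_le_mul_of_nonneg_left hmain (by positivity : (0:ℝ) ≤ 4*(r:ℝ)),
      mul_lt_mul_of_pos_left hgcdqr hy]
  calc ψ q / (q:ℝ) + ψ r / (r:ℝ)
      ≤ (q:ℝ)^(-δ)/q + (r:ℝ)^(-δ)/r := by gcongr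
    _ ≤ 2 * ((r:ℝ)^(-δ)/r) := by linarith
    _ < _ := h2
end
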